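/- arXiv:1201.3474 — 2 statements merged into one kernel-verified Lean document; each statement's English description precedes it below -/
import Mathlib

section
/- For a nonnegative g ∈ ℓ¹(V,m) ∩ ℓ²(V,m), sup_{u ∈ D(Q)} ⟨|u|, g⟩ / Q(u)^{1/2} = ⟨g, Gg⟩^{1/2}, where Gg = ∫₀^∞ e^{-tL} g dt. In particular the left side is finite if and only if ⟨g, Gg⟩ < ∞. -/
open scoped ENNReal NNReal BigOperators
open MeasureTheory Filter

/-- A weighted graph `(b,c)` over a vertex set `V`. -/
structure WeightedGraph (V : Type*) where
  b : V → V → ℝ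
  c : V → ℝ
  b_nonneg : ∀ x y, 0 ≤ b x y
  b_diag : ∀ x, b x x = 0
  b_symm : ∀ x y, b x y = b y x
  b_summable : ∀ x, Summable fun y => b x y
  c_nonneg : ∀ x, 0 ≤ c x

/-- Membership in `ℓ²(V,m)`. -/
def MemL2 {V : Type*} (m : V → ℝ) (u : V → ℝ) : Prop :=
  Summable fun x => u x ^ 2 * m x

/-- The inner product of `ℓ²(V,m)`. -/
noncomputable def l2inner {V : Type*} (m : V → ℝ) (u v : V → ℝ) : ℝ :=
  ∑' x, u x * v x * m x

namespace WeightedGraph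

variable {V : Type*} (G : WeightedGraph V)

/-- The energy functional `Q̃` with values in `[0,∞]`. -/
noncomputable def energy (u : V → ℝ) : ℝ≥0∞ :=
  (1 / 2) * ∑' p : V × V, ENNReal.ofReal (G.b p.1 p.2 * (u p.1 - u p.2) ^ 2)
    + ∑' x, ENNReal.ofReal (G.c x * u x ^ 2)

/-- The functions of finite energy (`D̃`). -/
def FiniteEnergy (u : V → ℝ) : Prop := G.energy u < ⊤

/-- The real-valued bilinear energy form (meaningful on functions of finite energy). -/
noncomputable def energyBilin (u v : V → ℝ) : ℝ :=
  (1 / 2) * ∑' p : V × V, G.b p.1 p.2 * (u p.1 - u p.2) * (v p.1 - v p.2)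
    + ∑' x, G.c x * u x * v x

/-- The generalized vertex degree. -/
noncomputable def deg (x : V) : ℝ := (∑' y, G.b x y) + G.c x

/-- The formal Laplacian `L̃` associated with `(b,c)` and the measure `m`. -/
noncomputable def formalL (m : V → ℝ) (u : V → ℝ) (x : V) : ℝ :=
  ((∑' y, G.b x y * (u x - u y)) + G.c x * u x) / m x

/-- Connectedness of the weighted graph: any two vertices are joined by a path of edges. -/
def Connected : Prop :=
  ∀ x y : V, ∃ (n : ℕ) (p : ℕ → V), p 0 = x ∧ p n = y ∧ ∀ i < n, 0 < G.b (p i) (p (i + 1))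

/-- The squared distance of the Yamasaki space with base point `o`. -/
noncomputable def ydistSq (o : V) (u v : V → ℝ) : ℝ :=
  (G.energy (fun x => u x - v x)).toReal + (u o - v o) ^ 2

/-- The domain of the regular Dirichlet form `Q^(D)`: the closure of the finitely
supported functions in `D̃ ∩ ℓ²(V,m)` with respect to the form norm. -/
def regDom (m : V → ℝ) : Set (V → ℝ) :=
  {u | G.FiniteEnergy u ∧ MemL2 m u ∧
    ∃ f : ℕ → V → ℝ, (∀ n, (Function.support (f n)).Finite) ∧
      Filter.Tendsto
        (fun n => (G.energy (fun x => u x - f n x)).toReal + ∑' x, (u x - f n x) ^ 2 * m x)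
        Filter.atTop (nhds 0)}

/-- Transience of a Dirichlet form given by its domain: existence of a strictly positive
reference function `g ∈ ℓ¹(V,m) ∩ ℓ^∞(V)` with `⟨|u|,g⟩ ≤ Q(u)^{1/2}` on the domain. -/
def FormTransient (m : V → ℝ) (dom : Set (V → ℝ)) : Prop :=
  ∃ g : V → ℝ, (∀ x, 0 < g x) ∧ (Summable fun x => g x * m x) ∧ (∃ C, ∀ x, g x ≤ C) ∧
    ∀ u ∈ dom, ∑' x, |u x| * g x * m x ≤ Real.sqrt (G.energyBilin u u)

end WeightedGraph

/-- The data of a Dirichlet form `Q` associated with a weighted graph `(b,c)` on `ℓ²(V,m)`,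
together with its semigroup `T t = e^{-tL}` and resolvent `R α = (L+α)^{-1}`, with the
standard properties: `Q` is a restriction of `Q̃` with `D(Q^(D)) ⊆ D(Q) ⊆ D(Q^(N))`,
the semigroup is symmetric, Markovian, positivity preserving, the resolvent is characterized
by the form, and the resolvent is the Laplace transform of the semigroup. -/
structure FormSetup {V : Type*} (G : WeightedGraph V) (m : V → ℝ) where
  dom : Set (V → ℝ)
  dom_fe : ∀ u ∈ dom, G.FiniteEnergy u
  dom_l2 : ∀ u ∈ dom, MemL2 m u
  reg_sub : G.regDom m ⊆ dom
  T : ℝ → (V → ℝ) → V → ℝ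
  R : ℝ → (V → ℝ) → V → ℝ
  T_linear : ∀ t, IsLinearMap ℝ (T t)
  R_linear : ∀ α, IsLinearMap ℝ (R α)
  T_semigroup : ∀ s t : ℝ, 0 < s → 0 < t → ∀ f, T (s + t) f = T s (T t f)
  T_l2 : ∀ t : ℝ, 0 < t → ∀ f, MemL2 m f → MemL2 m (T t f)
  T_symm : ∀ t : ℝ, 0 < t → ∀ f g, MemL2 m f → MemL2 m g →
    l2inner m (T t f) g = l2inner m f (T t g)
  T_contraction : ∀ t : ℝ, 0 < t → ∀ f, MemL2 m f →
    ∑' x, T t f x ^ 2 * m x ≤ ∑' x, f x ^ 2 * m x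
  T_pos : ∀ t : ℝ, 0 < t → ∀ f, (∀ x, 0 ≤ f x) → ∀ x, 0 ≤ T t f x
  T_markov : ∀ t : ℝ, 0 < t → ∀ f, (∀ x, 0 ≤ f x ∧ f x ≤ 1) →
    ∀ x, 0 ≤ T t f x ∧ T t f x ≤ 1
  T_cont : ∀ f, MemL2 m f → ∀ x, ContinuousOn (fun t => T t f x) (Set.Ioi (0 : ℝ))
  R_mem : ∀ α : ℝ, 0 < α → ∀ f, MemL2 m f → R α f ∈ dom
  R_pos : ∀ α : ℝ, 0 < α → ∀ f, (∀ x, 0 ≤ f x) → ∀ x, 0 ≤ R α f x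
  R_char : ∀ α : ℝ, 0 < α → ∀ f, MemL2 m f → ∀ v ∈ dom,
    G.energyBilin (R α f) v + α * l2inner m (R α f) v = l2inner m f v
  R_laplace : ∀ α : ℝ, 0 < α → ∀ f, MemL2 m f → (∀ x, 0 ≤ f x) → ∀ y,
    ENNReal.ofReal (R α f y) =
      ∫⁻ t in Set.Ioi (0 : ℝ), ENNReal.ofReal (Real.exp (-α * t) * T t f y)

namespace FormSetup

variable {V : Type*} {G : WeightedGraph V} {m : V → ℝ}

open scoped Classical in
/-- The Green function `G(x,y) = ∫₀^∞ (e^{-tL} δ_x)(y) dt`, with values in `[0,∞]`. -/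
noncomputable def green (S : FormSetup G m) (x y : V) : ℝ≥0∞ :=
  ∫⁻ t in Set.Ioi (0 : ℝ), ENNReal.ofReal (S.T t (fun z => if z = x then 1 else 0) y)

/-- The extended Dirichlet space `D(Q)_e`: functions which are pointwise limits of
`Q`-Cauchy sequences from `D(Q)`. -/
def extDom (S : FormSetup G m) : Set (V → ℝ) :=
  {u | ∃ f : ℕ → V → ℝ, (∀ n, f n ∈ S.dom) ∧
    (∀ ε > (0 : ℝ), ∃ N, ∀ p ≥ N, ∀ q ≥ N,
      G.energyBilin (fun x => f p x - f q x) (fun x => f p x - f q x) < ε) ∧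
    ∀ x, Filter.Tendsto (fun n => f n x) Filter.atTop (nhds (u x))}

/-- Stochastic completeness: the resolvent `(L+1)^{-1}`, extended to `ℓ^∞(V)` by monotone
limits, maps the constant function `1` to `1`. -/
def StochComplete (S : FormSetup G m) : Prop :=
  ∀ f : ℕ → V → ℝ, (∀ n, MemL2 m (f n)) →
    (∀ n x, 0 ≤ f n x ∧ f n x ≤ f (n + 1) x ∧ f n x ≤ 1) →
    (∀ x, Filter.Tendsto (fun n => f n x) Filter.atTop (nhds 1)) →
    ∀ x, Filter.Tendsto (fun n => S.R 1 (f n) x) Filter.atTop (nhds 1)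

end FormSetup

/-!
Write `Q_α(u,v) = Q(u,v) + α ⟨u,v⟩`, so that `R_α g` is characterised by `Q_α(R_α g, v) = ⟨g,v⟩`,
and `⟨g, R_α g⟩` increases to `⟨g, G g⟩` as `α ↓ 0` by monotone convergence in the Laplace
transform `R_α = ∫₀^∞ e^{-αt} e^{-tL} dt`.

Lower bound: `u = R_α g ≥ 0` has `Q(u) ≤ Q_α(u,u) = ⟨g,u⟩ = ⟨|u|,g⟩`, so its ratio is at least
`⟨g, R_α g⟩^{1/2}`.

Upper bound: `|u|` need not lie in `D(Q)`, but `w = β R_β |u|` does, with `Q(w) ≤ Q(u)` (by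
positivity of `R_β`) and `‖w‖ ≤ ‖u‖`. Cauchy–Schwarz for `Q_α` gives
`⟨w,g⟩ = Q_α(R_α g, w) ≤ ⟨g, R_α g⟩^{1/2} (Q(u) + α ‖u‖²)^{1/2}`; let `α → 0`, then `β → ∞`,
using that `β R_β g → g` in `ℓ²(V,m)`.
-/

open Topology

lemma sq_le_mul_of_forall_quadratic_nonneg {a b c : ℝ}
    (h : ∀ t : ℝ, 0 ≤ a + 2 * t * b + t ^ 2 * c) : b ^ 2 ≤ a * c := by
  have := discrim_le_zero fun t => (h t).trans_eq (by ring : _ = c * (t * t) + 2 * b * t + a)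
  rw [discrim] at this
  linarith

lemma summable_of_tsum_ofReal_ne_top {ι : Type*} {f : ι → ℝ} (hf : ∀ i, 0 ≤ f i)
    (h : ∑' i, ENNReal.ofReal (f i) ≠ ⊤) : Summable f :=
  (ENNReal.summable_toReal h).congr fun i => ENNReal.toReal_ofReal (hf i)

lemma le_mul_sqrt_of_forall_pos {x a q n : ℝ} (h : ∀ α > 0, x ≤ a * √(q + α * n)) :
    x ≤ a * √q := by
  have hlim : Tendsto (fun α => a * √(q + α * n)) (𝓝[>] 0) (𝓝 (a * √q)) := by
    have : Continuous fun α : ℝ => a * √(q + α * n) := by fun_prop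
    simpa using (this.tendsto 0).mono_left nhdsWithin_le_nhds
  exact ge_of_tendsto hlim (eventually_nhdsWithin_of_forall h)

lemma ENNReal.tsum_iSup_of_monotone {ι : Type*} {F : ℕ → ι → ℝ≥0∞}
    (hF : ∀ i, Monotone fun k => F k i) : ∑' i, ⨆ k, F k i = ⨆ k, ∑' i, F k i := by
  refine le_antisymm ?_ (iSup_le fun k => ENNReal.tsum_le_tsum fun i => le_iSup (F · i) k)
  rw [ENNReal.tsum_eq_iSup_sum]
  refine iSup_le fun s => ?_
  rw [ENNReal.finsetSum_iSup_of_monotone hF]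
  exact iSup_mono fun k => ENNReal.sum_le_tsum s

lemma monotone_ofReal_exp_mul {α : ℕ → ℝ} (hα : Antitone α) {t : ℝ} (ht : 0 ≤ t) (a : ℝ) :
    Monotone fun k => ENNReal.ofReal (Real.exp (-α k * t) * a) := fun j k hjk => by
  simp only [ENNReal.ofReal_mul (Real.exp_nonneg _)]
  gcongr
  exact hα hjk

lemma iSup_setLIntegral_ofReal_exp_mul {α : ℕ → ℝ} (hα : Antitone α)
    (hα0 : Tendsto α atTop (𝓝 0)) {f : ℝ → ℝ} (hf : AEMeasurable f (volume.restrict (Set.Ioi 0))) :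
    ⨆ k, ∫⁻ t in Set.Ioi 0, ENNReal.ofReal (Real.exp (-α k * t) * f t)
      = ∫⁻ t in Set.Ioi 0, ENNReal.ofReal (f t) := by
  rw [← lintegral_iSup' (f := fun k t => ENNReal.ofReal (Real.exp (-α k * t) * f t))
    (fun k => by fun_prop) ((ae_restrict_mem measurableSet_Ioi).mono fun t ht =>
      monotone_ofReal_exp_mul hα (le_of_lt ht) _)]
  refine setLIntegral_congr_fun measurableSet_Ioi fun t ht => ?_
  refine iSup_eq_of_tendsto (monotone_ofReal_exp_mul hα (le_of_lt ht) _) ?_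
  refine (ENNReal.continuous_ofReal.tendsto _).comp ?_
  have := ((Real.continuous_exp.tendsto _).comp ((hα0.neg).mul_const t)).mul_const (f t)
  simpa using this

section L2

variable {ι : Type*} {m : ι → ℝ} {u v w : ι → ℝ}

lemma MemL2.of_sq_le (hm : ∀ x, 0 ≤ m x) (hu : MemL2 m u) (h : ∀ x, v x ^ 2 ≤ u x ^ 2) :
    MemL2 m v :=
  hu.of_nonneg_of_le (fun x => mul_nonneg (sq_nonneg _) (hm x))
    fun x => mul_le_mul_of_nonneg_right (h x) (hm x)

lemma MemL2.abs (hu : MemL2 m u) : MemL2 m fun x => |u x| := by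
  simpa only [MemL2, sq_abs] using hu

lemma MemL2.posPart (hm : ∀ x, 0 ≤ m x) (hu : MemL2 m u) : MemL2 m u⁺ :=
  hu.of_sq_le hm fun x => by
    rw [Pi.posPart_apply, ← sq_abs (u x)]
    exact pow_le_pow_left₀ (posPart_nonneg _) (sup_le (le_abs_self _) (abs_nonneg _)) 2

lemma MemL2.negPart (hm : ∀ x, 0 ≤ m x) (hu : MemL2 m u) : MemL2 m u⁻ :=
  hu.of_sq_le hm fun x => by
    rw [Pi.negPart_apply, ← sq_abs (u x)]
    exact pow_le_pow_left₀ (negPart_nonneg _) (sup_le (neg_le_abs _) (abs_nonneg _)) 2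

lemma MemL2.const_smul (c : ℝ) (hu : MemL2 m u) : MemL2 m (c • u) := by
  refine (hu.mul_left (c ^ 2)).congr fun x => ?_
  simp only [Pi.smul_apply, smul_eq_mul]
  ring

lemma MemL2.add (hm : ∀ x, 0 ≤ m x) (hu : MemL2 m u) (hv : MemL2 m v) : MemL2 m (u + v) :=
  ((hu.mul_left 2).add (hv.mul_left 2)).of_nonneg_of_le
    (fun x => mul_nonneg (sq_nonneg _) (hm x)) fun x => by
      have : (u x + v x) ^ 2 ≤ 2 * u x ^ 2 + 2 * v x ^ 2 := by
        nlinarith [sq_nonneg (u x - v x)]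
      simp only [Pi.add_apply]
      nlinarith [hm x]

lemma MemL2.sub (hm : ∀ x, 0 ≤ m x) (hu : MemL2 m u) (hv : MemL2 m v) : MemL2 m (u - v) := by
  simpa only [sub_eq_add_neg, neg_one_smul] using hu.add hm (hv.const_smul (-1))

lemma MemL2.of_finite_support (hu : u.support.Finite) : MemL2 m u :=
  summable_of_ne_finset_zero (s := hu.toFinset) fun x hx => by
    simp [Function.notMem_support.1 (mt hu.mem_toFinset.2 hx)]

lemma MemL2.summable_mul (hm : ∀ x, 0 ≤ m x) (hu : MemL2 m u) (hv : MemL2 m v) :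
    Summable fun x => u x * v x * m x :=
  Summable.of_norm <| ((Summable.add hu hv).mul_left (1 / 2)).of_nonneg_of_le
    (fun x => norm_nonneg _) fun x => by
      rw [Real.norm_eq_abs, abs_mul, abs_mul, abs_of_nonneg (hm x)]
      have : |u x| * |v x| ≤ 1 / 2 * (u x ^ 2 + v x ^ 2) := by
        nlinarith [sq_nonneg (|u x| - |v x|), sq_abs (u x), sq_abs (v x)]
      nlinarith [hm x]

lemma l2inner_comm (u v : ι → ℝ) : l2inner m u v = l2inner m v u :=
  tsum_congr fun x => by ring

lemma l2inner_nonneg (hm : ∀ x, 0 ≤ m x) (hu : ∀ x, 0 ≤ u x) (hv : ∀ x, 0 ≤ v x) :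
    0 ≤ l2inner m u v :=
  tsum_nonneg fun x => mul_nonneg (mul_nonneg (hu x) (hv x)) (hm x)

lemma l2inner_self_nonneg (hm : ∀ x, 0 ≤ m x) (u : ι → ℝ) : 0 ≤ l2inner m u u :=
  tsum_nonneg fun x => mul_nonneg (mul_self_nonneg _) (hm x)

lemma l2inner_abs_abs (u : ι → ℝ) :
    l2inner m (fun x => |u x|) (fun x => |u x|) = l2inner m u u :=
  tsum_congr fun x => by rw [abs_mul_abs_self]

lemma l2inner_smul_left (c : ℝ) (u v : ι → ℝ) : l2inner m (c • u) v = c * l2inner m u v := by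
  rw [l2inner, l2inner, ← tsum_mul_left]
  exact tsum_congr fun x => by simp only [Pi.smul_apply, smul_eq_mul]; ring

lemma l2inner_smul_right (c : ℝ) (u v : ι → ℝ) : l2inner m u (c • v) = c * l2inner m u v := by
  rw [l2inner_comm, l2inner_smul_left, l2inner_comm]

lemma l2inner_add_left (hm : ∀ x, 0 ≤ m x) (hu : MemL2 m u) (hv : MemL2 m v) (hw : MemL2 m w) :
    l2inner m (u + v) w = l2inner m u w + l2inner m v w := by
  rw [l2inner, l2inner, l2inner, ← (hu.summable_mul hm hw).tsum_add (hv.summable_mul hm hw)]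
  exact tsum_congr fun x => by simp only [Pi.add_apply]; ring

lemma l2inner_sub_left (hm : ∀ x, 0 ≤ m x) (hu : MemL2 m u) (hv : MemL2 m v) (hw : MemL2 m w) :
    l2inner m (u - v) w = l2inner m u w - l2inner m v w := by
  rw [l2inner, l2inner, l2inner, ← (hu.summable_mul hm hw).tsum_sub (hv.summable_mul hm hw)]
  exact tsum_congr fun x => by simp only [Pi.sub_apply]; ring

lemma l2inner_add_right (hm : ∀ x, 0 ≤ m x) (hu : MemL2 m u) (hv : MemL2 m v) (hw : MemL2 m w) :
    l2inner m w (u + v) = l2inner m w u + l2inner m w v := by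
  rw [l2inner_comm, l2inner_add_left hm hu hv hw, l2inner_comm u, l2inner_comm v]

lemma l2inner_sub_right (hm : ∀ x, 0 ≤ m x) (hu : MemL2 m u) (hv : MemL2 m v) (hw : MemL2 m w) :
    l2inner m w (u - v) = l2inner m w u - l2inner m w v := by
  rw [l2inner_comm, l2inner_sub_left hm hu hv hw, l2inner_comm u, l2inner_comm v]

lemma l2inner_add_smul_self (hm : ∀ x, 0 ≤ m x) (hu : MemL2 m u) (hv : MemL2 m v) (t : ℝ) :
    l2inner m (u + t • v) (u + t • v)
      = l2inner m u u + 2 * t * l2inner m u v + t ^ 2 * l2inner m v v := by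
  have htv := hv.const_smul t
  rw [l2inner_add_left hm hu htv (hu.add hm htv), l2inner_add_right hm hu htv hu,
    l2inner_add_right hm hu htv htv, l2inner_smul_left, l2inner_smul_left, l2inner_smul_right,
    l2inner_smul_right, l2inner_comm v u]
  ring

lemma l2inner_sq_le (hm : ∀ x, 0 ≤ m x) (hu : MemL2 m u) (hv : MemL2 m v) :
    l2inner m u v ^ 2 ≤ l2inner m u u * l2inner m v v :=
  sq_le_mul_of_forall_quadratic_nonneg fun t =>
    l2inner_add_smul_self hm hu hv t ▸ l2inner_self_nonneg hm _

variable (m) in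
noncomputable def l2norm (u : ι → ℝ) : ℝ := √(l2inner m u u)

lemma l2norm_sq (hm : ∀ x, 0 ≤ m x) (u : ι → ℝ) : l2norm m u ^ 2 = l2inner m u u :=
  Real.sq_sqrt (l2inner_self_nonneg hm u)

lemma abs_l2inner_le (hm : ∀ x, 0 ≤ m x) (hu : MemL2 m u) (hv : MemL2 m v) :
    |l2inner m u v| ≤ l2norm m u * l2norm m v := by
  rw [l2norm, l2norm, ← Real.sqrt_mul (l2inner_self_nonneg hm u)]
  exact Real.abs_le_sqrt (l2inner_sq_le hm hu hv)

lemma l2norm_smul (c : ℝ) (u : ι → ℝ) : l2norm m (c • u) = |c| * l2norm m u := by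
  rw [l2norm, l2norm, l2inner_smul_left, l2inner_smul_right, ← mul_assoc, ← sq,
    Real.sqrt_mul (sq_nonneg c), Real.sqrt_sq_eq_abs]

lemma l2norm_sub_comm (u v : ι → ℝ) : l2norm m (u - v) = l2norm m (v - u) := by
  rw [← neg_sub, ← neg_one_smul ℝ, l2norm_smul, abs_neg, abs_one, one_mul]

lemma l2norm_add_le (hm : ∀ x, 0 ≤ m x) (hu : MemL2 m u) (hv : MemL2 m v) :
    l2norm m (u + v) ≤ l2norm m u + l2norm m v := by
  refine Real.sqrt_le_iff.2 ⟨add_nonneg (Real.sqrt_nonneg _) (Real.sqrt_nonneg _), ?_⟩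
  have h := l2inner_add_smul_self hm hu hv 1
  rw [one_smul] at h
  rw [h, add_sq, l2norm_sq hm, l2norm_sq hm]
  nlinarith [le_abs_self (l2inner m u v), abs_l2inner_le hm hu hv]

lemma exists_finite_support_l2norm_sub_lt (m u : ι → ℝ) {ε : ℝ} (hε : 0 < ε) :
    ∃ v : ι → ℝ, v.support.Finite ∧ l2norm m (u - v) < ε := by
  obtain ⟨s, hs⟩ := ((tendsto_order.1 (tendsto_tsum_compl_atTop_zero fun x => u x ^ 2 * m x)).2
    _ (pow_pos hε 2)).exists
  refine ⟨(s : Set ι).indicator u, s.finite_toSet.subset Set.support_indicator_subset, ?_⟩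
  rw [← Set.indicator_compl, l2norm, Real.sqrt_lt' hε, l2inner]
  refine lt_of_eq_of_lt ((tsum_congr fun x => ?_).trans
    (tsum_subtype (↑s)ᶜ fun x => u x ^ 2 * m x).symm) hs
  by_cases hx : x ∈ s <;> simp [Set.indicator, hx, sq]

end L2

namespace WeightedGraph

variable {V : Type*} (G : WeightedGraph V) {m : V → ℝ} {u v : V → ℝ}

lemma uncurry_b_nonneg (p : V × V) : 0 ≤ Function.uncurry G.b p := G.b_nonneg p.1 p.2

def edgeDiff : (V → ℝ) →ₗ[ℝ] (V × V → ℝ) where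
  toFun u p := u p.1 - u p.2
  map_add' u v := by ext p; simp only [Pi.add_apply]; ring
  map_smul' c u := by ext p; simp only [Pi.smul_apply, smul_eq_mul, RingHom.id_apply]; ring

lemma energyBilin_eq_l2inner (u v : V → ℝ) :
    G.energyBilin u v
      = 1 / 2 * l2inner (Function.uncurry G.b) (edgeDiff u) (edgeDiff v) + l2inner G.c u v := by
  simp only [energyBilin, l2inner, edgeDiff, LinearMap.coe_mk, AddHom.coe_mk, Function.uncurry]
  congr 1
  · exact congrArg _ (tsum_congr fun _ => by ring)
  · exact tsum_congr fun _ => by ring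

lemma energy_eq_tsum_ofReal (u : V → ℝ) :
    G.energy u = 1 / 2 * ∑' p, ENNReal.ofReal (edgeDiff u p ^ 2 * Function.uncurry G.b p)
      + ∑' x, ENNReal.ofReal (u x ^ 2 * G.c x) := by
  simp only [energy, edgeDiff, LinearMap.coe_mk, AddHom.coe_mk, Function.uncurry, mul_comm]

section

variable {G}

lemma FiniteEnergy.memL2_edgeDiff (hu : G.FiniteEnergy u) :
    MemL2 (Function.uncurry G.b) (edgeDiff u) := by
  rw [FiniteEnergy, energy_eq_tsum_ofReal] at hu
  exact summable_of_tsum_ofReal_ne_top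
    (fun p => mul_nonneg (sq_nonneg _) (G.uncurry_b_nonneg p)) fun h =>
      ne_top_of_le_ne_top hu.ne le_self_add (ENNReal.mul_eq_top.2 (.inl ⟨by simp, h⟩))

lemma FiniteEnergy.memL2_c (hu : G.FiniteEnergy u) : MemL2 G.c u := by
  rw [FiniteEnergy, energy_eq_tsum_ofReal] at hu
  exact summable_of_tsum_ofReal_ne_top (fun x => mul_nonneg (sq_nonneg _) (G.c_nonneg _))
    (ne_top_of_le_ne_top hu.ne le_add_self)

lemma finiteEnergy_of_memL2 (h₁ : MemL2 (Function.uncurry G.b) (edgeDiff u))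
    (h₂ : MemL2 G.c u) : G.FiniteEnergy u := by
  rw [FiniteEnergy, energy_eq_tsum_ofReal]
  exact ENNReal.add_lt_top.2
    ⟨ENNReal.mul_lt_top (by norm_num) h₁.tsum_ofReal_lt_top, h₂.tsum_ofReal_lt_top⟩

end

lemma summable_sq_mul_b_of_finite_support (hu : u.support.Finite) :
    Summable fun p : V × V => u p.1 ^ 2 * G.b p.1 p.2 := by
  refine (summable_prod_of_nonneg (fun p => mul_nonneg (sq_nonneg _) (G.b_nonneg _ _))).2
    ⟨fun x => (G.b_summable x).mul_left (u x ^ 2), ?_⟩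
  refine summable_of_ne_finset_zero (s := hu.toFinset) fun x hx => ?_
  simp [Function.notMem_support.1 (mt hu.mem_toFinset.2 hx)]

lemma finiteEnergy_of_finite_support (hu : u.support.Finite) : G.FiniteEnergy u := by
  refine finiteEnergy_of_memL2 ?_ (MemL2.of_finite_support hu)
  have h₁ := G.summable_sq_mul_b_of_finite_support hu
  have h₂ : Summable fun p : V × V => u p.2 ^ 2 * G.b p.1 p.2 :=
    ((Equiv.prodComm V V).summable_iff.2 h₁).congr fun p => by simp [G.b_symm]
  refine ((h₁.add h₂).mul_left 2).of_nonneg_of_le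
    (fun p => mul_nonneg (sq_nonneg _) (G.b_nonneg _ _)) fun p => ?_
  have := G.b_nonneg p.1 p.2
  simp only [edgeDiff, LinearMap.coe_mk, AddHom.coe_mk, Function.uncurry]
  nlinarith [sq_nonneg (u p.1 + u p.2)]

lemma energyBilin_self_nonneg (u : V → ℝ) : 0 ≤ G.energyBilin u u := by
  rw [energyBilin_eq_l2inner]
  have := l2inner_self_nonneg G.uncurry_b_nonneg (edgeDiff u)
  have := l2inner_self_nonneg G.c_nonneg u
  positivity

lemma energyBilin_smul_self (c : ℝ) (u : V → ℝ) :
    G.energyBilin (c • u) (c • u) = c ^ 2 * G.energyBilin u u := by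
  simp only [energyBilin_eq_l2inner, map_smul, l2inner_smul_left, l2inner_smul_right]
  ring

variable (m) in
noncomputable def shiftedBilin (α : ℝ) (u v : V → ℝ) : ℝ :=
  G.energyBilin u v + α * l2inner m u v

lemma shiftedBilin_comm (α : ℝ) (u v : V → ℝ) :
    G.shiftedBilin m α u v = G.shiftedBilin m α v u := by
  rw [shiftedBilin, shiftedBilin, energyBilin_eq_l2inner, energyBilin_eq_l2inner,
    l2inner_comm (edgeDiff u), l2inner_comm u, l2inner_comm (m := m) u]

lemma shiftedBilin_self_nonneg (hm : ∀ x, 0 ≤ m x) {α : ℝ} (hα : 0 ≤ α) (u : V → ℝ) :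
    0 ≤ G.shiftedBilin m α u u :=
  add_nonneg (G.energyBilin_self_nonneg u) (mul_nonneg hα (l2inner_self_nonneg hm u))

lemma shiftedBilin_add_smul_self (hm : ∀ x, 0 ≤ m x) (α : ℝ) (hu : G.FiniteEnergy u)
    (hu' : MemL2 m u) (hv : G.FiniteEnergy v) (hv' : MemL2 m v) (t : ℝ) :
    G.shiftedBilin m α (u + t • v) (u + t • v) = G.shiftedBilin m α u u
      + 2 * t * G.shiftedBilin m α u v + t ^ 2 * G.shiftedBilin m α v v := by
  simp only [shiftedBilin, energyBilin_eq_l2inner, map_add, map_smul]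
  rw [l2inner_add_smul_self G.uncurry_b_nonneg hu.memL2_edgeDiff hv.memL2_edgeDiff,
    l2inner_add_smul_self G.c_nonneg hu.memL2_c hv.memL2_c, l2inner_add_smul_self hm hu' hv']
  ring

lemma shiftedBilin_sq_le (hm : ∀ x, 0 ≤ m x) {α : ℝ} (hα : 0 ≤ α) (hu : G.FiniteEnergy u)
    (hu' : MemL2 m u) (hv : G.FiniteEnergy v) (hv' : MemL2 m v) :
    G.shiftedBilin m α u v ^ 2 ≤ G.shiftedBilin m α u u * G.shiftedBilin m α v v :=
  sq_le_mul_of_forall_quadratic_nonneg fun t =>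
    G.shiftedBilin_add_smul_self hm α hu hu' hv hv' t ▸ G.shiftedBilin_self_nonneg hm hα _

end WeightedGraph

namespace FormSetup

variable {V : Type*} {G : WeightedGraph V} {m : V → ℝ} (S : FormSetup G m) {α β : ℝ}
  {f g u v w : V → ℝ}

lemma resolvent_memL2 (hβ : 0 < β) (hf : MemL2 m f) : MemL2 m (S.R β f) :=
  S.dom_l2 _ (S.R_mem β hβ f hf)

lemma resolvent_finiteEnergy (hβ : 0 < β) (hf : MemL2 m f) : G.FiniteEnergy (S.R β f) :=
  S.dom_fe _ (S.R_mem β hβ f hf)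

lemma mem_dom_of_finite_support (hu : u.support.Finite) : u ∈ S.dom :=
  S.reg_sub ⟨G.finiteEnergy_of_finite_support hu, .of_finite_support hu, fun _ => u,
    fun _ => hu, by simp [WeightedGraph.energy]⟩

lemma shiftedBilin_resolvent (hβ : 0 < β) (hf : MemL2 m f) (hv : v ∈ S.dom) :
    G.shiftedBilin m β (S.R β f) v = l2inner m f v :=
  S.R_char β hβ f hf v hv

lemma shiftedBilin_resolvent_self (hβ : 0 < β) (hf : MemL2 m f) :
    G.shiftedBilin m β (S.R β f) (S.R β f) = l2inner m f (S.R β f) :=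
  S.shiftedBilin_resolvent hβ hf (S.R_mem β hβ f hf)

lemma l2inner_resolvent_comm (hβ : 0 < β) (hf : MemL2 m f) (hv : MemL2 m v) :
    l2inner m f (S.R β v) = l2inner m v (S.R β f) := by
  rw [← S.shiftedBilin_resolvent hβ hf (S.R_mem β hβ v hv), G.shiftedBilin_comm,
    S.shiftedBilin_resolvent hβ hv (S.R_mem β hβ f hf)]

lemma mul_l2inner_resolvent_self_le (hβ : 0 < β) (hf : MemL2 m f) :
    β * l2inner m (S.R β f) (S.R β f) ≤ l2inner m f (S.R β f) := by
  have := S.shiftedBilin_resolvent_self hβ hf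
  rw [WeightedGraph.shiftedBilin] at this
  linarith [G.energyBilin_self_nonneg (S.R β f)]

/-- Expansion of `‖f - β R_β f‖² ≥ 0`. -/
lemma l2inner_sub_smul_resolvent_nonneg (hm : ∀ x, 0 ≤ m x) (hβ : 0 < β) (hf : MemL2 m f) :
    0 ≤ l2inner m f f - 2 * β * l2inner m f (S.R β f)
      + β ^ 2 * l2inner m (S.R β f) (S.R β f) := by
  have h := l2inner_add_smul_self hm hf (S.resolvent_memL2 hβ hf) (-β)
  have := l2inner_self_nonneg hm (f + (-β) • S.R β f)
  linarith

lemma l2inner_smul_resolvent_self_le (hm : ∀ x, 0 ≤ m x) (hβ : 0 < β) (hf : MemL2 m f) :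
    l2inner m (β • S.R β f) (β • S.R β f) ≤ l2inner m f f := by
  have h₁ := S.l2inner_sub_smul_resolvent_nonneg hm hβ hf
  have h₂ := S.mul_l2inner_resolvent_self_le hβ hf
  rw [l2inner_smul_left, l2inner_smul_right]
  nlinarith

lemma l2norm_smul_resolvent_le (hm : ∀ x, 0 ≤ m x) (hβ : 0 < β) (hf : MemL2 m f) :
    l2norm m (β • S.R β f) ≤ l2norm m f :=
  Real.sqrt_le_sqrt (S.l2inner_smul_resolvent_self_le hm hβ hf)

lemma energyBilin_smul_resolvent_le (hm : ∀ x, 0 ≤ m x) (hβ : 0 < β) (hf : MemL2 m f) :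
    G.energyBilin (β • S.R β f) (β • S.R β f)
      ≤ β * (l2inner m f f - β * l2inner m f (S.R β f)) := by
  have h₁ := S.l2inner_sub_smul_resolvent_nonneg hm hβ hf
  have h₂ := S.shiftedBilin_resolvent_self hβ hf
  rw [WeightedGraph.shiftedBilin] at h₂
  rw [G.energyBilin_smul_self]
  nlinarith

/-- Expand `Q_β(u - β R_β u) ≥ 0`, where `Q_β = Q + β ⟨·,·⟩`. -/
lemma mul_l2inner_sub_le_energyBilin (hm : ∀ x, 0 ≤ m x) (hβ : 0 < β) (hu : u ∈ S.dom) :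
    β * (l2inner m u u - β * l2inner m u (S.R β u)) ≤ G.energyBilin u u := by
  have hu₂ := S.dom_l2 u hu
  have h := G.shiftedBilin_add_smul_self hm β (S.dom_fe u hu) hu₂
    (S.resolvent_finiteEnergy hβ hu₂) (S.resolvent_memL2 hβ hu₂) (-β)
  rw [G.shiftedBilin_comm β u (S.R β u), S.shiftedBilin_resolvent hβ hu₂ hu,
    S.shiftedBilin_resolvent_self hβ hu₂] at h
  have := G.shiftedBilin_self_nonneg hm hβ.le (u + (-β) • S.R β u)
  rw [h, WeightedGraph.shiftedBilin] at this
  nlinarith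

lemma mul_l2inner_sub_smul_resolvent_le (hm : ∀ x, 0 ≤ m x) (hβ : 0 < β) (hu : u ∈ S.dom) :
    β * l2inner m (u - β • S.R β u) (u - β • S.R β u) ≤ G.energyBilin u u := by
  have hu₂ := S.dom_l2 u hu
  have h := l2inner_add_smul_self hm hu₂ (S.resolvent_memL2 hβ hu₂) (-β)
  rw [neg_smul, ← sub_eq_add_neg] at h
  have h₁ := S.mul_l2inner_sub_le_energyBilin hm hβ hu
  have h₂ := S.mul_l2inner_resolvent_self_le hβ hu₂
  rw [h]
  nlinarith

/-- Positivity of `R_β` splits `⟨R_β u, u⟩` along `u = u⁺ - u⁻` and `|u| = u⁺ + u⁻`. -/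
lemma l2inner_resolvent_le_abs (hm : ∀ x, 0 ≤ m x) (hβ : 0 < β) (hu : MemL2 m u) :
    l2inner m u (S.R β u) ≤ l2inner m (fun x => |u x|) (S.R β fun x => |u x|) := by
  have hp := hu.posPart hm
  have hn := hu.negPart hm
  have hRp := S.resolvent_memL2 hβ hp
  have hRn := S.resolvent_memL2 hβ hn
  have habs : (fun x => |u x|) = u⁺ + u⁻ := (posPart_add_negPart u).symm
  conv_lhs => rw [← posPart_sub_negPart u]
  rw [habs, (S.R_linear β).map_sub, (S.R_linear β).map_add,
    l2inner_sub_left hm hp hn (hRp.sub hm hRn), l2inner_sub_right hm hRp hRn hp,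
    l2inner_sub_right hm hRp hRn hn, l2inner_add_left hm hp hn (hRp.add hm hRn),
    l2inner_add_right hm hRp hRn hp, l2inner_add_right hm hRp hRn hn]
  have h₁ := l2inner_nonneg hm (posPart_nonneg u) (S.R_pos β hβ _ (negPart_nonneg u))
  have h₂ := l2inner_nonneg hm (negPart_nonneg u) (S.R_pos β hβ _ (posPart_nonneg u))
  linarith

lemma energyBilin_smul_resolvent_abs_le (hm : ∀ x, 0 ≤ m x) (hβ : 0 < β) (hu : u ∈ S.dom) :
    G.energyBilin (β • S.R β fun x => |u x|) (β • S.R β fun x => |u x|) ≤ G.energyBilin u u := by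
  have hu₂ := S.dom_l2 u hu
  calc _ ≤ β * (l2inner m (fun x => |u x|) (fun x => |u x|)
          - β * l2inner m (fun x => |u x|) (S.R β fun x => |u x|)) :=
        S.energyBilin_smul_resolvent_le hm hβ hu₂.abs
    _ ≤ β * (l2inner m u u - β * l2inner m u (S.R β u)) := by
        rw [l2inner_abs_abs]
        have := S.l2inner_resolvent_le_abs hm hβ hu₂
        gcongr
    _ ≤ G.energyBilin u u := S.mul_l2inner_sub_le_energyBilin hm hβ hu

lemma l2norm_sub_smul_resolvent_le (hm : ∀ x, 0 ≤ m x) (hβ : 0 < β) (hf : MemL2 m f)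
    (hu : MemL2 m u) :
    l2norm m (f - β • S.R β f) ≤ 2 * l2norm m (f - u) + l2norm m (u - β • S.R β u) := by
  have hRu := (S.resolvent_memL2 hβ hu).const_smul β
  have hRuf := (S.resolvent_memL2 hβ (hu.sub hm hf)).const_smul β
  have hsplit : f - β • S.R β f = (f - u) + ((u - β • S.R β u) + β • S.R β (u - f)) := by
    rw [(S.R_linear β).map_sub, smul_sub]
    abel
  calc l2norm m (f - β • S.R β f)
      ≤ l2norm m (f - u) + (l2norm m (u - β • S.R β u) + l2norm m (β • S.R β (u - f))) := by
        rw [hsplit]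
        refine (l2norm_add_le hm (hf.sub hm hu) ((hu.sub hm hRu).add hm hRuf)).trans ?_
        gcongr
        exact l2norm_add_le hm (hu.sub hm hRu) hRuf
    _ ≤ 2 * l2norm m (f - u) + l2norm m (u - β • S.R β u) := by
        have := S.l2norm_smul_resolvent_le hm hβ (hu.sub hm hf)
        rw [l2norm_sub_comm u f] at this
        linarith

/-- Finitely supported functions lie in `S.dom` and are dense in `ℓ²`, and on `S.dom`
`‖u - β R_β u‖² ≤ Q(u) / β`. -/
lemma tendsto_l2norm_sub_smul_resolvent (hm : ∀ x, 0 ≤ m x) (hf : MemL2 m f) :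
    Tendsto (fun β => l2norm m (f - β • S.R β f)) atTop (𝓝 0) := by
  refine tendsto_order.2 ⟨fun a ha => .of_forall fun β => ha.trans_le (Real.sqrt_nonneg _),
    fun ε hε => ?_⟩
  obtain ⟨u, hu, hfu⟩ := exists_finite_support_l2norm_sub_lt m f (by positivity : 0 < ε / 4)
  have hdom := S.mem_dom_of_finite_support hu
  have hQ : ∀ᶠ β in atTop, G.energyBilin u u / β < (ε / 2) ^ 2 :=
    (tendsto_const_nhds.div_atTop tendsto_id).eventually (gt_mem_nhds (by positivity))
  filter_upwards [hQ, eventually_gt_atTop 0] with β hQβ hβ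
  have hu' : l2norm m (u - β • S.R β u) < ε / 2 := by
    refine (Real.sqrt_lt' (by positivity)).2 (lt_of_le_of_lt ?_ hQβ)
    rw [le_div_iff₀ hβ, mul_comm]
    exact S.mul_l2inner_sub_smul_resolvent_le hm hβ hdom
  have := S.l2norm_sub_smul_resolvent_le hm hβ hf (.of_finite_support hu)
  linarith

lemma tendsto_l2inner_smul_resolvent (hm : ∀ x, 0 ≤ m x) (hf : MemL2 m f) (hv : MemL2 m v) :
    Tendsto (fun β => l2inner m (β • S.R β v) f) atTop (𝓝 (l2inner m v f)) := by
  have key : ∀ β > 0, ‖l2inner m (β • S.R β v) f - l2inner m v f‖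
      ≤ l2norm m v * l2norm m (f - β • S.R β f) := fun β hβ => by
    have hRf := (S.resolvent_memL2 hβ hf).const_smul β
    rw [l2inner_smul_left, l2inner_comm, S.l2inner_resolvent_comm hβ hf hv,
      ← l2inner_smul_right, ← l2inner_sub_right hm hRf hf hv, l2norm_sub_comm]
    exact abs_l2inner_le hm hv (hRf.sub hm hf)
  rw [tendsto_iff_norm_sub_tendsto_zero]
  refine squeeze_zero' (.of_forall fun _ => norm_nonneg _)
    ((eventually_gt_atTop 0).mono key) ?_
  simpa using (S.tendsto_l2norm_sub_smul_resolvent hm hf).const_mul (l2norm m v)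

lemma l2inner_le_sqrt_mul_sqrt_shiftedBilin (hm : ∀ x, 0 ≤ m x) (hα : 0 < α) (hf : MemL2 m f)
    (hw : w ∈ S.dom) :
    l2inner m w f ≤ √(l2inner m f (S.R α f)) * √(G.shiftedBilin m α w w) := by
  rw [l2inner_comm, ← S.shiftedBilin_resolvent hα hf hw, ← S.shiftedBilin_resolvent_self hα hf,
    ← Real.sqrt_mul (G.shiftedBilin_self_nonneg hm hα.le _)]
  exact (le_abs_self _).trans <| Real.abs_le_sqrt <| G.shiftedBilin_sq_le hm hα.le
    (S.resolvent_finiteEnergy hα hf) (S.resolvent_memL2 hα hf) (S.dom_fe w hw) (S.dom_l2 w hw)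

lemma l2inner_abs_le_sqrt_mul_sqrt (hm : ∀ x, 0 ≤ m x) (hf : MemL2 m f) {M : ℝ}
    (hM : ∀ α > 0, l2inner m f (S.R α f) ≤ M) (hu : u ∈ S.dom) :
    l2inner m (fun x => |u x|) f ≤ √M * √(G.energyBilin u u) := by
  have hu₂ := (S.dom_l2 u hu).abs
  refine le_of_tendsto (S.tendsto_l2inner_smul_resolvent hm hf hu₂)
    ((eventually_gt_atTop 0).mono fun β hβ => ?_)
  have hw : β • S.R β (fun x => |u x|) ∈ S.dom := by
    rw [← (S.R_linear β).map_smul]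
    exact S.R_mem β hβ _ (hu₂.const_smul β)
  refine le_mul_sqrt_of_forall_pos (n := l2inner m u u) fun α hα => ?_
  refine (S.l2inner_le_sqrt_mul_sqrt_shiftedBilin hm hα hf hw).trans ?_
  have hQ := S.energyBilin_smul_resolvent_abs_le hm hβ hu
  have hN := S.l2inner_smul_resolvent_self_le hm hβ hu₂
  rw [l2inner_abs_abs] at hN
  gcongr
  · exact hM α hα
  · exact add_le_add hQ (mul_le_mul_of_nonneg_left hN hα.le)

/-- `⟨g, G g⟩` with `G g = ∫₀^∞ e^{-tL} g dt`. -/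
noncomputable def greenPairing (g : V → ℝ) : ℝ≥0∞ :=
  ∑' x, ENNReal.ofReal (g x * m x) * ∫⁻ t in Set.Ioi 0, ENNReal.ofReal (S.T t g x)

lemma ofReal_l2inner_resolvent (hm : ∀ x, 0 ≤ m x) (hα : 0 < α) (hg0 : ∀ x, 0 ≤ g x)
    (hg : MemL2 m g) :
    ENNReal.ofReal (l2inner m g (S.R α g)) = ∑' x, ENNReal.ofReal (g x * m x)
      * ∫⁻ t in Set.Ioi 0, ENNReal.ofReal (Real.exp (-α * t) * S.T t g x) := by
  have hR0 := S.R_pos α hα g hg0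
  rw [l2inner, ENNReal.ofReal_tsum_of_nonneg
    (fun x => mul_nonneg (mul_nonneg (hg0 x) (hR0 x)) (hm x))
    (hg.summable_mul hm (S.resolvent_memL2 hα hg))]
  refine tsum_congr fun x => ?_
  rw [← S.R_laplace α hα g hg hg0 x, ← ENNReal.ofReal_mul (mul_nonneg (hg0 x) (hm x)),
    mul_right_comm]

lemma ofReal_l2inner_resolvent_le_greenPairing (hm : ∀ x, 0 ≤ m x) (hα : 0 < α)
    (hg0 : ∀ x, 0 ≤ g x) (hg : MemL2 m g) :
    ENNReal.ofReal (l2inner m g (S.R α g)) ≤ S.greenPairing g := by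
  rw [S.ofReal_l2inner_resolvent hm hα hg0 hg]
  refine ENNReal.tsum_le_tsum fun x => mul_le_mul_right ?_ _
  refine setLIntegral_mono' measurableSet_Ioi fun t ht => ?_
  rw [ENNReal.ofReal_mul (Real.exp_nonneg _)]
  refine mul_le_of_le_one_left zero_le (ENNReal.ofReal_le_one.2 (Real.exp_le_one_iff.2 ?_))
  nlinarith [ht.out]

lemma greenPairing_eq_iSup (hm : ∀ x, 0 ≤ m x) (hg0 : ∀ x, 0 ≤ g x) (hg : MemL2 m g) :
    S.greenPairing g = ⨆ k : ℕ, ENNReal.ofReal (l2inner m g (S.R (1 / ((k : ℝ) + 1)) g)) := by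
  have hanti : Antitone fun k : ℕ => 1 / ((k : ℝ) + 1) := fun j k hjk =>
    one_div_le_one_div_of_le (by positivity) (by gcongr)
  rw [iSup_congr fun k => S.ofReal_l2inner_resolvent hm (by positivity) hg0 hg,
    ← ENNReal.tsum_iSup_of_monotone (F := fun k x => ENNReal.ofReal (g x * m x)
        * ∫⁻ t in Set.Ioi 0, ENNReal.ofReal (Real.exp (-(1 / ((k : ℝ) + 1)) * t) * S.T t g x))
      fun x j k hjk => mul_le_mul_right (setLIntegral_mono' measurableSet_Ioi fun t ht =>
        monotone_ofReal_exp_mul hanti (le_of_lt ht) _ hjk) _]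
  refine tsum_congr fun x => ?_
  rw [← ENNReal.mul_iSup, iSup_setLIntegral_ofReal_exp_mul hanti
    tendsto_one_div_add_atTop_nhds_zero_nat ((S.T_cont g hg x).aemeasurable measurableSet_Ioi)]

lemma sqrt_ofReal_l2inner_resolvent_le (hm : ∀ x, 0 ≤ m x) (hα : 0 < α) (hg0 : ∀ x, 0 ≤ g x)
    (hg : MemL2 m g) :
    ENNReal.ofReal (l2inner m g (S.R α g)) ^ (1 / 2 : ℝ)
      ≤ ENNReal.ofReal (∑' x, |S.R α g x| * g x * m x)
        / ENNReal.ofReal √(G.energyBilin (S.R α g) (S.R α g)) := by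
  have hR0 := S.R_pos α hα g hg0
  have hnum : ∑' x, |S.R α g x| * g x * m x = l2inner m g (S.R α g) :=
    tsum_congr fun x => by rw [abs_of_nonneg (hR0 x)]; ring
  have hQ : G.energyBilin (S.R α g) (S.R α g) ≤ l2inner m g (S.R α g) := by
    have := S.shiftedBilin_resolvent_self hα hg
    rw [WeightedGraph.shiftedBilin] at this
    nlinarith [l2inner_self_nonneg hm (S.R α g)]
  rw [hnum]
  obtain h0 | hpos := (l2inner_nonneg hm hg0 hR0).eq_or_lt
  · simp [← h0]
  calc ENNReal.ofReal (l2inner m g (S.R α g)) ^ (1 / 2 : ℝ)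
      = ENNReal.ofReal (l2inner m g (S.R α g)) / ENNReal.ofReal √(l2inner m g (S.R α g)) := by
        rw [← ENNReal.ofReal_div_of_pos (Real.sqrt_pos.2 hpos), Real.div_sqrt, Real.sqrt_eq_rpow,
          ENNReal.ofReal_rpow_of_nonneg hpos.le (by norm_num)]
    _ ≤ _ := ENNReal.div_le_div_left (ENNReal.ofReal_le_ofReal (Real.sqrt_le_sqrt hQ)) _

lemma ofReal_div_le_sqrt_greenPairing (hm : ∀ x, 0 ≤ m x) (hg0 : ∀ x, 0 ≤ g x) (hg : MemL2 m g)
    (hu : u ∈ S.dom) :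
    ENNReal.ofReal (∑' x, |u x| * g x * m x) / ENNReal.ofReal √(G.energyBilin u u)
      ≤ S.greenPairing g ^ (1 / 2 : ℝ) := by
  obtain hM | hM := eq_or_ne (S.greenPairing g) ⊤
  · simp [hM]
  have hle : ∀ α > 0, l2inner m g (S.R α g) ≤ (S.greenPairing g).toReal := fun α hα =>
    (ENNReal.ofReal_le_iff_le_toReal hM).1
      (S.ofReal_l2inner_resolvent_le_greenPairing hm hα hg0 hg)
  refine ENNReal.div_le_of_le_mul ?_
  calc ENNReal.ofReal (∑' x, |u x| * g x * m x)
      ≤ ENNReal.ofReal (√(S.greenPairing g).toReal * √(G.energyBilin u u)) :=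
        ENNReal.ofReal_le_ofReal (S.l2inner_abs_le_sqrt_mul_sqrt hm hg hle hu)
    _ = S.greenPairing g ^ (1 / 2 : ℝ) * ENNReal.ofReal √(G.energyBilin u u) := by
        rw [ENNReal.ofReal_mul (Real.sqrt_nonneg _), Real.sqrt_eq_rpow,
          ← ENNReal.ofReal_rpow_of_nonneg ENNReal.toReal_nonneg (by norm_num),
          ENNReal.ofReal_toReal hM]

end FormSetup

theorem sup_eq_sqrt_green_pairing_general {V : Type*} (G : WeightedGraph V)
    (m : V → ℝ) (hm : ∀ x, 0 < m x) (S : FormSetup G m) (g : V → ℝ)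
    (hg0 : ∀ x, 0 ≤ g x) (hg2 : MemL2 m g) :
    (⨆ u ∈ S.dom, ENNReal.ofReal (∑' x, |u x| * g x * m x) /
        ENNReal.ofReal (Real.sqrt (G.energyBilin u u)))
      = (∑' x, ENNReal.ofReal (g x * m x) *
          ∫⁻ t in Set.Ioi (0 : ℝ), ENNReal.ofReal (S.T t g x)) ^ (1 / 2 : ℝ) := by
  have hm0 : ∀ x, 0 ≤ m x := fun x => (hm x).le
  refine le_antisymm (iSup₂_le fun u hu => S.ofReal_div_le_sqrt_greenPairing hm0 hg0 hg2 hu) ?_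
  calc S.greenPairing g ^ (1 / 2 : ℝ)
      = ⨆ k : ℕ, ENNReal.ofReal (l2inner m g (S.R (1 / ((k : ℝ) + 1)) g)) ^ (1 / 2 : ℝ) := by
        rw [S.greenPairing_eq_iSup hm0 hg0 hg2]
        exact Monotone.map_iSup_of_continuousAt (ENNReal.continuous_rpow_const.continuousAt)
          (ENNReal.monotone_rpow_of_nonneg (by norm_num)) (by simp)
    _ ≤ _ := iSup_le fun k => le_iSup₂_of_le (S.R _ g) (S.R_mem _ (by positivity) g hg2)
        (S.sqrt_ofReal_l2inner_resolvent_le hm0 (by positivity) hg0 hg2)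

/-- for nonnegative `g ∈ ℓ¹(V,m) ∩ ℓ²(V,m)`,
`sup_{u ∈ D(Q)} ⟨|u|,g⟩/Q(u)^{1/2} = ⟨g,Gg⟩^{1/2}` where `Gg = ∫₀^∞ e^{-tL} g dt`. -/
theorem sup_eq_sqrt_green_pairing {V : Type*} [Countable V] (G : WeightedGraph V)
    (m : V → ℝ) (hm : ∀ x, 0 < m x) (S : FormSetup G m) (g : V → ℝ)
    (hg0 : ∀ x, 0 ≤ g x) (hg1 : Summable fun x => g x * m x) (hg2 : MemL2 m g) :
    (⨆ u ∈ S.dom, ENNReal.ofReal (∑' x, |u x| * g x * m x) /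
        ENNReal.ofReal (Real.sqrt (G.energyBilin u u)))
      = (∑' x, ENNReal.ofReal (g x * m x) *
          ∫⁻ t in Set.Ioi (0 : ℝ), ENNReal.ofReal (S.T t g x)) ^ (1 / 2 : ℝ) :=
  sup_eq_sqrt_green_pairing_general G m hm S g hg0 hg2
end

section
/- Superharmonic function characterization: for (b,0) connected, Q^{(D)} is recurrent if and only if every superharmonic function of finite energy is constant, i.e. every u with Q̃(u) < ∞ and L̃u ≥ 0 pointwise is constant. -/
open scoped ENNReal NNReal BigOperators
open MeasureTheory Filter

/-!
Write `g_α = (L + α)⁻¹ δ_x`. As `α ↓ 0`, `g_α` increases to the Green function `G(x, ·)`, and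
testing the resolvent equation against `g_α` gives `Q(g_α) ≤ g_α(x) m(x)`.

If `G(x, x) = ∞`, the normalised functions `g_α / g_α(x)` have energy `O(1 / g_α(x)) → 0`, while
Harnack's inequality keeps them bounded below at every vertex; approximating them by finitely
supported functions yields a null sequence `e_n`. Testing a superharmonic `u` of finite energy
against `e_n` (Green's formula and Cauchy–Schwarz) shows that `u` is harmonic. The truncation
`min u (u x)` is again superharmonic of finite energy, and it is strictly superharmonic at `x` if
a neighbour of `x` has a smaller value; so `u` is constant along edges.

If `G(x, y) < ∞` for some `y`, Harnack's inequality makes `G(x, ·)` finite everywhere; by Fatou it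
has finite energy, and passing to the limit in the resolvent equation gives `L̃ G(x, ·) = δ_x`,
so `G(x, ·)` is superharmonic and not constant.
-/

open Topology

section SquareSummable

variable {ι : Type*} {f g : ι → ℝ}

lemma summable_mul_of_summable_sq (hf : Summable fun i => f i ^ 2)
    (hg : Summable fun i => g i ^ 2) : Summable fun i => f i * g i :=
  ((hf.add hg).div_const 2).of_norm_bounded fun i => by
    rw [Real.norm_eq_abs, abs_mul, le_div_iff₀ two_pos, ← sq_abs (f i), ← sq_abs (g i)]
    nlinarith [two_mul_le_add_sq |f i| |g i|]

lemma summable_sq_sub (hf : Summable fun i => f i ^ 2) (hg : Summable fun i => g i ^ 2) :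
    Summable fun i => (f i - g i) ^ 2 :=
  ((hf.add hg).mul_left 2).of_nonneg_of_le (fun _ => sq_nonneg _)
    fun i => by nlinarith [sq_nonneg (f i + g i)]

lemma tsum_sq_sub_le (hf : Summable fun i => f i ^ 2) (hg : Summable fun i => g i ^ 2) :
    ∑' i, (f i - g i) ^ 2 ≤ 2 * (∑' i, f i ^ 2 + ∑' i, g i ^ 2) := by
  rw [← (hf.tsum_add hg), ← tsum_mul_left]
  exact (summable_sq_sub hf hg).tsum_le_tsum (fun i => by nlinarith [sq_nonneg (f i + g i)])
    ((hf.add hg).mul_left 2)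

lemma tsum_mul_le_sqrt_mul_sqrt (hf : Summable fun i => f i ^ 2)
    (hg : Summable fun i => g i ^ 2) :
    ∑' i, f i * g i ≤ √(∑' i, f i ^ 2) * √(∑' i, g i ^ 2) :=
  (summable_mul_of_summable_sq hf hg).tsum_le_of_sum_le fun s =>
    (Real.sum_mul_le_sqrt_mul_sqrt s f g).trans <| mul_le_mul
      (Real.sqrt_le_sqrt <| hf.sum_le_tsum s fun _ _ => sq_nonneg _)
      (Real.sqrt_le_sqrt <| hg.sum_le_tsum s fun _ _ => sq_nonneg _)
      (Real.sqrt_nonneg _) (Real.sqrt_nonneg _)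

end SquareSummable

lemma hasSum_tsum_prod_of_finite_fst {α β M : Type*} [AddCommMonoid M] [TopologicalSpace M]
    [ContinuousAdd M] {f : α × β → M} {s : Set α} (hs : s.Finite)
    (hf : ∀ p : α × β, p.1 ∉ s → f p = 0) (hrow : ∀ x, Summable fun y => f (x, y)) :
    HasSum f (∑' x, ∑' y, f (x, y)) := by
  classical
  rw [tsum_eq_sum (s := hs.toFinset) fun x hx =>
    (tsum_congr fun y => hf (x, y) (by simpa using hx)).trans tsum_zero]
  have hrow' : ∀ x ∈ hs.toFinset,
      HasSum (fun p : α × β => if p.1 = x then f p else 0) (∑' y, f (x, y)) := by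
    intro x _
    rw [← (Prod.mk_right_injective x).hasSum_iff]
    · simpa [Function.comp_def] using (hrow x).hasSum
    · rintro p hp
      rw [if_neg]
      rintro rfl
      exact hp ⟨p.2, rfl⟩
  convert hasSum_sum hrow' using 1
  funext p
  rw [Finset.sum_ite_eq]
  split_ifs with h
  · rfl
  · exact hf p (by simpa using h)

lemma memL2_of_finite_support {V : Type*} {m v : V → ℝ} (hv : v.support.Finite) : MemL2 m v :=
  summable_of_hasFiniteSupport <| hv.subset fun x hx hvx => hx (by simp [hvx])

section Single

variable {V : Type*} [DecidableEq V] {m : V → ℝ}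

lemma single_one_nonneg (x z : V) : 0 ≤ (Pi.single x (1 : ℝ) : V → ℝ) z := by
  rw [Pi.single_apply]; split_ifs <;> norm_num

lemma memL2_single (x : V) : MemL2 m (Pi.single x 1) :=
  memL2_of_finite_support ((Set.finite_singleton x).subset Pi.support_single_subset)

lemma l2inner_single_left (f : V → ℝ) (x : V) : l2inner m (Pi.single x 1) f = f x * m x := by
  rw [l2inner, tsum_eq_single x fun z hz => by simp [hz]]
  simp

lemma l2inner_single_right (f : V → ℝ) (x : V) : l2inner m f (Pi.single x 1) = f x * m x := by
  rw [l2inner, tsum_eq_single x fun z hz => by simp [hz]]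
  simp

end Single

namespace WeightedGraph

variable {V : Type*} (G : WeightedGraph V)

-- For `c = 0`, `Q̃(u) = ½ ∑ₚ (grad u p)²` (`energy_eq`): energy estimates become `ℓ²` estimates.
noncomputable def grad (u : V → ℝ) (p : V × V) : ℝ := √(G.b p.1 p.2) * (u p.1 - u p.2)

noncomputable def laplacian (u : V → ℝ) (x : V) : ℝ := ∑' y, G.b x y * (u x - u y)

variable {G} {m : V → ℝ} {u v : V → ℝ}

lemma grad_mul_grad (p : V × V) :
    G.grad u p * G.grad v p = G.b p.1 p.2 * (u p.1 - u p.2) * (v p.1 - v p.2) := by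
  have := Real.mul_self_sqrt (G.b_nonneg p.1 p.2)
  simp only [grad]
  linear_combination (u p.1 - u p.2) * (v p.1 - v p.2) * this

lemma sq_grad (p : V × V) : G.grad u p ^ 2 = G.b p.1 p.2 * (u p.1 - u p.2) ^ 2 := by
  rw [sq, grad_mul_grad, mul_assoc, ← sq]

lemma grad_sub (p : V × V) : G.grad (fun x => u x - v x) p = G.grad u p - G.grad v p := by
  simp only [grad]; ring

lemma grad_const_mul (r : ℝ) (p : V × V) : G.grad (fun x => r * u x) p = r * G.grad u p := by
  simp only [grad]; ring

lemma sq_grad_comp_le {C : ℝ → ℝ} (hC : LipschitzWith 1 C) (p : V × V) :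
    G.grad (fun x => C (u x)) p ^ 2 ≤ G.grad u p ^ 2 := by
  have h := hC.dist_le_mul (u p.1) (u p.2)
  simp only [Real.dist_eq, NNReal.coe_one, one_mul] at h
  rw [sq_grad, sq_grad, ← sq_abs (C _ - C _), ← sq_abs (u p.1 - u p.2)]
  gcongr
  exact G.b_nonneg _ _

lemma summable_sq_grad_comp {C : ℝ → ℝ} (hC : LipschitzWith 1 C)
    (hu : Summable fun p => G.grad u p ^ 2) : Summable fun p => G.grad (fun x => C (u x)) p ^ 2 :=
  hu.of_nonneg_of_le (fun _ => sq_nonneg _) (sq_grad_comp_le hC)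

lemma summable_b_mul_sub (hu : Summable fun p => G.grad u p ^ 2) (x : V) :
    Summable fun y => G.b x y * (u x - u y) := by
  have hb : Summable fun y => √(G.b x y) ^ 2 :=
    (G.b_summable x).congr fun y => (Real.sq_sqrt (G.b_nonneg x y)).symm
  refine (summable_mul_of_summable_sq hb (hu.prod_factor x)).congr fun y => ?_
  simp only [grad]
  rw [← mul_assoc, ← sq, Real.sq_sqrt (G.b_nonneg x y)]

lemma summable_b_mul (hu : Summable fun p => G.grad u p ^ 2) (x : V) :
    Summable fun y => G.b x y * u y :=
  (((G.b_summable x).mul_right (u x)).sub (summable_b_mul_sub hu x)).congr fun y => by ring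

lemma summable_sq_grad_of_finite_support (hv : v.support.Finite) :
    Summable fun p => G.grad v p ^ 2 := by
  set F : V × V → ℝ := fun p => G.b p.1 p.2 * v p.1 ^ 2
  have hF : Summable F := (hasSum_tsum_prod_of_finite_fst (f := F) hv
    (fun p hp => by simp [F, Function.notMem_support.1 hp])
    fun x => (G.b_summable x).mul_right (v x ^ 2)).summable
  have hFswap : Summable fun p : V × V => F p.swap := (Equiv.prodComm V V).summable_iff.2 hF
  refine ((hF.add hFswap).mul_left 2).of_nonneg_of_le (fun _ => sq_nonneg _) fun p => ?_
  simp only [sq_grad, F, Prod.fst_swap, Prod.snd_swap, G.b_symm p.2 p.1]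
  nlinarith [G.b_nonneg p.1 p.2, mul_nonneg (G.b_nonneg p.1 p.2) (sq_nonneg (v p.1 + v p.2))]

lemma tsum_grad_mul_grad_of_finite_support (hu : ∀ x, Summable fun y => G.b x y * (u x - u y))
    (hv : v.support.Finite) :
    ∑' p, G.grad u p * G.grad v p = 2 * ∑' x, v x * G.laplacian u x := by
  set F : V × V → ℝ := fun p => G.b p.1 p.2 * (u p.1 - u p.2) * v p.1
  have hF : HasSum F (∑' x, v x * G.laplacian u x) := by
    convert hasSum_tsum_prod_of_finite_fst (f := F) hv
      (fun p hp => by simp [F, Function.notMem_support.1 hp]) fun x => (hu x).mul_right (v x)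
      using 2
    funext x
    rw [laplacian, ← tsum_mul_left]
    exact tsum_congr fun y => by ring
  have hFswap : HasSum (fun p : V × V => F p.swap) (∑' x, v x * G.laplacian u x) :=
    (Equiv.prodComm V V).hasSum_iff.2 hF
  -- by symmetry of `b`, `grad u p * grad v p = F p + F p.swap`
  refine ((hF.add hFswap).congr_fun fun p => ?_).tsum_eq.trans (two_mul _).symm
  simp only [grad_mul_grad, F, Prod.fst_swap, Prod.snd_swap, G.b_symm p.2 p.1]
  ring

lemma summable_sq_grad_of_tendsto {w : ℕ → V → ℝ} {C : ℝ}
    (hw : ∀ x, Tendsto (fun n => w n x) atTop (𝓝 (u x)))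
    (hs : ∀ n, Summable fun p => G.grad (w n) p ^ 2) (hC : ∀ n, ∑' p, G.grad (w n) p ^ 2 ≤ C) :
    Summable fun p => G.grad u p ^ 2 := by
  refine summable_of_sum_le (c := C) (fun p => sq_nonneg _) fun s => le_of_tendsto'
    (tendsto_finsetSum s fun p _ => (((hw p.1).sub (hw p.2)).const_mul _).pow 2) fun n => ?_
  exact ((hs n).sum_le_tsum s fun _ _ => sq_nonneg _).trans (hC n)

lemma tendsto_laplacian {w : ℕ → V → ℝ} {W : V → ℝ} {x : V}
    (hW : Summable fun y => G.b x y * W y) (hwW : ∀ n y, |w n y| ≤ W y)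
    (hw : ∀ y, Tendsto (fun n => w n y) atTop (𝓝 (u y))) :
    Tendsto (fun n => G.laplacian (w n) x) atTop (𝓝 (G.laplacian u x)) := by
  refine tendsto_tsum_of_dominated_convergence (bound := fun y => G.b x y * (W x + W y))
    ((((G.b_summable x).mul_right (W x)).add hW).congr fun y => by ring)
    (fun y => ((hw x).sub (hw y)).const_mul _) (Eventually.of_forall fun n y => ?_)
  rw [Real.norm_eq_abs, abs_mul, abs_of_nonneg (G.b_nonneg x y)]
  gcongr
  · exact G.b_nonneg x y
  · exact (abs_sub _ _).trans (add_le_add (hwW n x) (hwW n y))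

lemma laplacian_eq_zero_of_forall_eq {x : V} (h : ∀ y, u x = u y) : G.laplacian u x = 0 :=
  (tsum_congr fun y => by rw [h y, sub_self, mul_zero]).trans tsum_zero

lemma laplacian_min_nonneg (hu : Summable fun p => G.grad u p ^ 2) {x : V}
    (hx : 0 ≤ G.laplacian u x) (c : ℝ) : 0 ≤ G.laplacian (fun y => min (u y) c) x := by
  have hmin := summable_b_mul_sub (summable_sq_grad_comp (C := fun t => min t c)
    (by simpa using LipschitzWith.id.min_const c) hu) x
  rcases le_or_gt (u x) c with h | h
  · refine hx.trans <| (summable_b_mul_sub hu x).tsum_le_tsum (fun y => ?_) hmin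
    dsimp only
    rw [min_eq_left h]
    exact mul_le_mul_of_nonneg_left (by linarith [min_le_left (u y) c]) (G.b_nonneg x y)
  · refine tsum_nonneg fun y => ?_
    dsimp only
    rw [min_eq_right h.le]
    exact mul_nonneg (G.b_nonneg x y) (sub_nonneg.2 (min_le_right _ _))

lemma laplacian_min_self_pos (hu : Summable fun p => G.grad u p ^ 2) {x y : V}
    (hxy : 0 < G.b x y) (hlt : u y < u x) : 0 < G.laplacian (fun z => min (u z) (u x)) x := by
  have hmin := summable_b_mul_sub (summable_sq_grad_comp (C := fun t => min t (u x))
    (by simpa using LipschitzWith.id.min_const (u x)) hu) x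
  refine lt_of_lt_of_le ?_ (hmin.le_tsum y fun z _ =>
    mul_nonneg (G.b_nonneg x z) (sub_nonneg.2 (by simp)))
  rw [min_self, min_eq_left hlt.le]
  exact mul_pos hxy (sub_pos.2 hlt)

lemma Connected.apply_eq {β : Type*} {f : V → β} (hconn : G.Connected)
    (hf : ∀ x y, 0 < G.b x y → f x = f y) (x y : V) : f x = f y := by
  obtain ⟨n, p, rfl, rfl, hp⟩ := hconn x y
  suffices ∀ k ≤ n, f (p 0) = f (p k) from this n le_rfl
  intro k hk
  induction k with
  | zero => rfl
  | succ k ih => exact (ih (by omega)).trans (hf _ _ (hp k (by omega)))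

lemma energy_const_mul (r : ℝ) (u : V → ℝ) :
    G.energy (fun x => r * u x) = ENNReal.ofReal (r ^ 2) * G.energy u := by
  have h : ∀ a b : ℝ, ENNReal.ofReal (a * (r * b) ^ 2) =
      ENNReal.ofReal (r ^ 2) * ENNReal.ofReal (a * b ^ 2) := fun a b => by
    rw [← ENNReal.ofReal_mul (sq_nonneg r)]; ring_nf
  simp only [energy, ← mul_sub, h, ENNReal.tsum_mul_left]
  ring

lemma const_mul_mem_regDom (hu : u ∈ G.regDom m) (r : ℝ) : (fun x => r * u x) ∈ G.regDom m := by
  obtain ⟨hfe, hl2, f, hfs, hconv⟩ := hu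
  refine ⟨?_, (hl2.mul_left (r ^ 2)).congr fun x => by ring, fun n x => r * f n x,
    fun n => (hfs n).subset (Function.support_mul_subset_right _ _), ?_⟩
  · rw [FiniteEnergy, energy_const_mul]
    exact ENNReal.mul_lt_top ENNReal.ofReal_lt_top hfe
  · convert hconv.const_mul (r ^ 2) using 1
    · funext n
      simp only [← mul_sub, energy_const_mul, ENNReal.toReal_mul,
        ENNReal.toReal_ofReal (sq_nonneg r), mul_pow, mul_assoc, tsum_mul_left, mul_add]
    · simp

section NoKilling

variable (hc : ∀ x, G.c x = 0)
include hc

lemma energy_eq (u : V → ℝ) :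
    G.energy u = (1 / 2) * ∑' p, ENNReal.ofReal (G.grad u p ^ 2) := by
  simp [energy, hc, sq_grad]

lemma toReal_energy (u : V → ℝ) : (G.energy u).toReal = 1 / 2 * ∑' p, G.grad u p ^ 2 := by
  rw [energy_eq hc, ENNReal.toReal_mul, ENNReal.tsum_toReal_eq fun _ => ENNReal.ofReal_ne_top]
  simp [ENNReal.toReal_ofReal (sq_nonneg _)]

lemma finiteEnergy_iff : G.FiniteEnergy u ↔ Summable fun p => G.grad u p ^ 2 := by
  refine ⟨fun h => ?_, fun h => ?_⟩
  · have h' : ∑' p, ENNReal.ofReal (G.grad u p ^ 2) ≠ ⊤ := by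
      rw [FiniteEnergy, energy_eq hc] at h
      exact fun htop => by simp [htop] at h
    simpa [ENNReal.toReal_ofReal (sq_nonneg _)] using ENNReal.summable_toReal h'
  · rw [FiniteEnergy, energy_eq hc]
    exact ENNReal.mul_lt_top (by norm_num) h.tsum_ofReal_lt_top

lemma energyBilin_eq (u v : V → ℝ) :
    G.energyBilin u v = 1 / 2 * ∑' p, G.grad u p * G.grad v p := by
  simp [energyBilin, hc, grad_mul_grad]

lemma formalL_eq (x : V) : G.formalL m u x = G.laplacian u x / m x := by
  simp [formalL, laplacian, hc]

lemma formalL_nonneg_iff {x : V} (hm : 0 < m x) :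
    0 ≤ G.formalL m u x ↔ 0 ≤ G.laplacian u x := by
  rw [formalL_eq hc, le_div_iff₀ hm, zero_mul]

lemma mem_regDom_of_finite_support (hv : v.support.Finite) : v ∈ G.regDom m :=
  ⟨(finiteEnergy_iff hc).2 (summable_sq_grad_of_finite_support hv), memL2_of_finite_support hv,
    fun _ => v, fun _ => hv, by simp [energy]⟩

lemma exists_finite_support_near (hm : ∀ x, 0 ≤ m x) {w : V → ℝ}
    (hw : w ∈ G.regDom m) {ε : ℝ} (hε : 0 < ε) :
    ∃ f : V → ℝ, f.support.Finite ∧ ∑' p, G.grad (fun x => w x - f x) p ^ 2 ≤ ε ∧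
      ∀ x, (w x - f x) ^ 2 * m x ≤ ε := by
  obtain ⟨-, hl2, f, hfs, hconv⟩ := hw
  obtain ⟨n, hn⟩ := (hconv.eventually (gt_mem_nhds (half_pos hε))).exists
  rw [toReal_energy hc] at hn
  have hE : 0 ≤ ∑' p, G.grad (fun x => w x - f n x) p ^ 2 := tsum_nonneg fun _ => sq_nonneg _
  have hL : 0 ≤ ∑' x, (w x - f n x) ^ 2 * m x :=
    tsum_nonneg fun x => mul_nonneg (sq_nonneg _) (hm x)
  refine ⟨f n, hfs n, by linarith, fun x => ?_⟩
  have hsum : Summable fun x => (w x - f n x) ^ 2 * m x :=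
    ((Summable.add hl2 (memL2_of_finite_support (m := m) (hfs n))).mul_left 2).of_nonneg_of_le
      (fun x => mul_nonneg (sq_nonneg _) (hm x))
      fun x => by nlinarith [mul_nonneg (hm x) (sq_nonneg (w x + f n x))]
  linarith [hsum.le_tsum x fun y _ => mul_nonneg (sq_nonneg _) (hm y)]

end NoKilling

-- A rescaled form of the sequences `e_n → 1` with `Q̃(e_n) → 0` that characterise recurrence.
variable (G) in
def HasNullSequence : Prop :=
  ∃ e : ℕ → V → ℝ, (∀ n, (e n).support.Finite) ∧ (∀ n x, 0 ≤ e n x) ∧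
    Tendsto (fun n => ∑' p, G.grad (e n) p ^ 2) atTop (𝓝 0) ∧
    ∀ x, ∃ ρ > 0, ∀ᶠ n in atTop, ρ ≤ e n x

namespace HasNullSequence

lemma laplacian_nonpos (hnull : G.HasNullSequence) (hu : Summable fun p => G.grad u p ^ 2)
    (hsup : ∀ x, 0 ≤ G.laplacian u x) (z : V) : G.laplacian u z ≤ 0 := by
  obtain ⟨e, hfin, hnonneg, henergy, hlow⟩ := hnull
  obtain ⟨ρ, hρ, hev⟩ := hlow z
  set E : ℝ := ∑' p, G.grad u p ^ 2
  have hbound : ∀ n, e n z * G.laplacian u z ≤ 1 / 2 * (√E * √(∑' p, G.grad (e n) p ^ 2)) := by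
    intro n
    have hsum : Summable fun x => e n x * G.laplacian u x := summable_of_hasFiniteSupport
      ((hfin n).subset (Function.support_mul_subset_left _ _))
    calc e n z * G.laplacian u z ≤ ∑' x, e n x * G.laplacian u x :=
          hsum.le_tsum z fun x _ => mul_nonneg (hnonneg n x) (hsup x)
      _ = 1 / 2 * ∑' p, G.grad u p * G.grad (e n) p := by
          rw [tsum_grad_mul_grad_of_finite_support (summable_b_mul_sub hu) (hfin n)]; ring
      _ ≤ 1 / 2 * (√E * √(∑' p, G.grad (e n) p ^ 2)) := by
          gcongr
          exact tsum_mul_le_sqrt_mul_sqrt hu (summable_sq_grad_of_finite_support (hfin n))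
  have hlim : Tendsto (fun n => 1 / 2 * (√E * √(∑' p, G.grad (e n) p ^ 2))) atTop (𝓝 0) := by
    convert (henergy.sqrt.const_mul √E).const_mul (1 / 2) using 2
    simp
  have : ρ * G.laplacian u z ≤ 0 := ge_of_tendsto hlim <| hev.mono fun n hn =>
    (mul_le_mul_of_nonneg_right hn (hsup z)).trans (hbound n)
  nlinarith

lemma apply_eq_of_adj (hnull : G.HasNullSequence) (hu : Summable fun p => G.grad u p ^ 2)
    (hsup : ∀ x, 0 ≤ G.laplacian u x) {x y : V} (hxy : 0 < G.b x y) : u x = u y := by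
  have key : ∀ x y, 0 < G.b x y → ¬ u y < u x := fun x y hxy hlt =>
    (laplacian_min_self_pos hu hxy hlt).not_ge <| hnull.laplacian_nonpos
      (summable_sq_grad_comp (C := fun t => min t (u x))
        (by simpa using LipschitzWith.id.min_const (u x)) hu)
      (fun z => laplacian_min_nonneg hu (hsup z) _) x
  exact le_antisymm (not_lt.1 (key x y hxy)) (not_lt.1 (key y x (by rwa [G.b_symm])))

end HasNullSequence

lemma hasNullSequence_of_regDom (hc : ∀ x, G.c x = 0) (hm : ∀ x, 0 < m x) {w : ℕ → V → ℝ}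
    (hw : ∀ n, w n ∈ G.regDom m)
    (henergy : Tendsto (fun n => ∑' p, G.grad (w n) p ^ 2) atTop (𝓝 0))
    (hlow : ∀ x, ∃ ρ > 0, ∀ᶠ n in atTop, ρ ≤ w n x) : G.HasNullSequence := by
  choose f hfin hfE hfpt using fun n : ℕ =>
    exists_finite_support_near hc (fun x => (hm x).le) (hw n) (Nat.one_div_pos_of_nat (n := n))
  have hpos : LipschitzWith 1 fun t : ℝ => max t 0 := by simpa using LipschitzWith.id.max_const 0
  refine ⟨fun n x => max (f n x) 0, fun n => (hfin n).subset fun x hx hfx => hx (by simp [hfx]),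
    fun n x => le_max_right _ _, ?_, fun x => ?_⟩
  · have hwE n : Summable fun p => G.grad (w n) p ^ 2 := (finiteEnergy_iff hc).1 (hw n).1
    have hfE' n : Summable fun p => G.grad (f n) p ^ 2 :=
      summable_sq_grad_of_finite_support (hfin n)
    have hdiff n : Summable fun p => G.grad (fun x => w n x - f n x) p ^ 2 := by
      simpa only [grad_sub] using summable_sq_sub (hwE n) (hfE' n)
    refine squeeze_zero (g := fun n : ℕ => 2 * (∑' p, G.grad (w n) p ^ 2 + 1 / ((n : ℝ) + 1)))
      (fun n => tsum_nonneg fun _ => sq_nonneg _) (fun n => ?_)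
      (by simpa using (henergy.add tendsto_one_div_add_atTop_nhds_zero_nat).const_mul 2)
    calc ∑' p, G.grad (fun x => max (f n x) 0) p ^ 2 ≤ ∑' p, G.grad (f n) p ^ 2 :=
          (summable_sq_grad_comp hpos (hfE' n)).tsum_le_tsum (sq_grad_comp_le hpos) (hfE' n)
      _ = ∑' p, (G.grad (w n) p - G.grad (fun x => w n x - f n x) p) ^ 2 := by
          simp only [grad_sub, sub_sub_cancel]
      _ ≤ 2 * (∑' p, G.grad (w n) p ^ 2 + ∑' p, G.grad (fun x => w n x - f n x) p ^ 2) :=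
          tsum_sq_sub_le (hwE n) (hdiff n)
      _ ≤ 2 * (∑' p, G.grad (w n) p ^ 2 + 1 / (n + 1)) := by gcongr; exact hfE n
  · obtain ⟨ρ, hρ, hev⟩ := hlow x
    have hsmall : ∀ᶠ n : ℕ in atTop, 1 / ((n : ℝ) + 1) / m x < (ρ / 2) ^ 2 :=
      (tendsto_one_div_add_atTop_nhds_zero_nat.div_const (m x)).eventually_lt_const
        (by rw [zero_div]; positivity)
    refine ⟨ρ / 2, half_pos hρ, ?_⟩
    filter_upwards [hev, hsmall] with n hn hs
    have hsq : (w n x - f n x) ^ 2 < (ρ / 2) ^ 2 :=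
      ((le_div_iff₀ (hm x)).2 (hfpt n x)).trans_lt hs
    linarith [le_max_left (f n x) 0, (abs_lt_of_sq_lt_sq' hsq (by positivity)).2]

end WeightedGraph

namespace FormSetup

open WeightedGraph
open scoped Classical

variable {V : Type*} {G : WeightedGraph V} {m : V → ℝ} (S : FormSetup G m) {α : ℝ}

noncomputable def resolventKernel (α : ℝ) (x y : V) : ℝ≥0∞ :=
  ∫⁻ t in Set.Ioi (0 : ℝ), ENNReal.ofReal (Real.exp (-α * t) * S.T t (Pi.single x 1) y)

lemma green_eq_resolventKernel (x y : V) : S.green x y = S.resolventKernel 0 x y := by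
  simp only [green, resolventKernel, neg_zero, zero_mul, Real.exp_zero, one_mul]
  congr! 4
  funext z
  simp [Pi.single_apply]

lemma ofReal_R_single (hα : 0 < α) (x y : V) :
    ENNReal.ofReal (S.R α (Pi.single x 1) y) = S.resolventKernel α x y :=
  S.R_laplace α hα _ (memL2_single x) (single_one_nonneg x) y

lemma R_single_nonneg (hα : 0 < α) (x y : V) : 0 ≤ S.R α (Pi.single x 1) y :=
  S.R_pos α hα _ (single_one_nonneg x) y

lemma mul_T_single_le {t : ℝ} (ht : 0 < t) {f : V → ℝ} (hf : ∀ z, 0 ≤ f z) (w y : V) :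
    f w * S.T t (Pi.single w 1) y ≤ S.T t f y := by
  have h := S.T_pos t ht (f - f w • Pi.single w 1) (fun z => by
    by_cases hz : z = w
    · simp [hz]
    · simpa [hz] using hf z) y
  rw [(S.T_linear t).map_sub, (S.T_linear t).map_smul] at h
  simpa [sub_nonneg] using h

lemma resolventKernel_harnack (α : ℝ) (x w y : V) :
    ENNReal.ofReal (Real.exp (-α) * S.T 1 (Pi.single w 1) y) * S.resolventKernel α x w ≤
      S.resolventKernel α x y := by
  set F : ℝ → ℝ≥0∞ := fun t => ENNReal.ofReal (Real.exp (-α * t) * S.T t (Pi.single x 1) y)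
  have hshift : ∫⁻ s in Set.Ioi (0 : ℝ), F (s + 1) = ∫⁻ t in Set.Ioi (1 : ℝ), F t := by
    have := (measurePreserving_add_right volume (1 : ℝ)).setLIntegral_comp_preimage_emb
      (measurableEmbedding_addRight 1) F (Set.Ioi 1)
    rwa [Set.preimage_add_const_Ioi, sub_self] at this
  rw [resolventKernel, ← lintegral_const_mul' _ _ ENNReal.ofReal_ne_top]
  calc _ ≤ ∫⁻ s in Set.Ioi (0 : ℝ), F (s + 1) := setLIntegral_mono' measurableSet_Ioi fun s hs => by
          have hT := S.mul_T_single_le one_pos (S.T_pos s hs _ (single_one_nonneg x)) w y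
          rw [← S.T_semigroup 1 s one_pos hs, add_comm 1 s] at hT
          rw [← ENNReal.ofReal_mul (mul_nonneg (Real.exp_pos _).le
            (S.T_pos 1 one_pos _ (single_one_nonneg w) y))]
          refine ENNReal.ofReal_le_ofReal ?_
          have hexp : Real.exp (-α) * Real.exp (-α * s) = Real.exp (-α * (s + 1)) := by
            rw [← Real.exp_add]; ring_nf
          calc _ = Real.exp (-α * (s + 1)) *
                (S.T s (Pi.single x 1) w * S.T 1 (Pi.single w 1) y) := by rw [← hexp]; ring
            _ ≤ Real.exp (-α * (s + 1)) * S.T (s + 1) (Pi.single x 1) y := by gcongr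
    _ = ∫⁻ t in Set.Ioi (1 : ℝ), F t := hshift
    _ ≤ S.resolventKernel α x y := lintegral_mono_set (Set.Ioi_subset_Ioi zero_le_one)

lemma resolventKernel_anti {β : ℝ} (hαβ : α ≤ β) (x y : V) :
    S.resolventKernel β x y ≤ S.resolventKernel α x y :=
  setLIntegral_mono' measurableSet_Ioi fun t (ht : 0 < t) => ENNReal.ofReal_le_ofReal <|
    mul_le_mul_of_nonneg_right (Real.exp_le_exp.2 (by nlinarith))
      (S.T_pos t ht _ (single_one_nonneg x) y)

lemma tendsto_resolventKernel (x y : V) :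
    Tendsto (fun n : ℕ => S.resolventKernel (1 / (n + 1)) x y) atTop
      (𝓝 (S.resolventKernel 0 x y)) := by
  refine lintegral_tendsto_of_tendsto_of_monotone (fun n => ?_)
    (ae_restrict_of_forall_mem measurableSet_Ioi fun t (ht : 0 < t) n k hnk => ?_)
    (ae_restrict_of_forall_mem measurableSet_Ioi fun t _ => ?_)
  · exact (ENNReal.continuous_ofReal.comp_continuousOn ((by fun_prop : Continuous fun t : ℝ =>
      Real.exp (-(1 / (n + 1)) * t)).continuousOn.mul (S.T_cont _ (memL2_single x) y))).aemeasurable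
      measurableSet_Ioi
  · exact ENNReal.ofReal_le_ofReal <| mul_le_mul_of_nonneg_right
      (Real.exp_le_exp.2 (by nlinarith [Nat.one_div_le_one_div (α := ℝ) hnk]))
      (S.T_pos t ht _ (single_one_nonneg x) y)
  · convert ENNReal.tendsto_ofReal
      (((tendsto_one_div_add_atTop_nhds_zero_nat.neg.mul_const t).rexp).mul_const
        (S.T t (Pi.single x 1) y)) using 3

lemma tendsto_ofReal_R_single (x y : V) :
    Tendsto (fun n : ℕ => ENNReal.ofReal (S.R (1 / (n + 1)) (Pi.single x 1) y)) atTop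
      (𝓝 (S.green x y)) := by
  rw [green_eq_resolventKernel]
  exact (S.tendsto_resolventKernel x y).congr fun _ =>
    (S.ofReal_R_single Nat.one_div_pos_of_nat x y).symm

lemma R_single_le_green (hα : 0 < α) {x y : V} (h : S.green x y ≠ ⊤) :
    S.R α (Pi.single x 1) y ≤ (S.green x y).toReal := by
  rw [← ENNReal.ofReal_le_iff_le_toReal h, S.ofReal_R_single hα, green_eq_resolventKernel]
  exact S.resolventKernel_anti hα.le x y

lemma tendsto_R_single_green {x y : V} (h : S.green x y ≠ ⊤) :
    Tendsto (fun n : ℕ => S.R (1 / (n + 1)) (Pi.single x 1) y) atTop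
      (𝓝 (S.green x y).toReal) :=
  ((ENNReal.tendsto_toReal h).comp (S.tendsto_ofReal_R_single x y)).congr fun _ =>
    ENNReal.toReal_ofReal (S.R_single_nonneg Nat.one_div_pos_of_nat x y)

lemma tendsto_R_single_atTop {x y : V} (h : S.green x y = ⊤) :
    Tendsto (fun n : ℕ => S.R (1 / (n + 1)) (Pi.single x 1) y) atTop atTop :=
  ENNReal.tendsto_ofReal_nhds_top.1 (h ▸ S.tendsto_ofReal_R_single x y)

lemma green_eq_top_of_green_eq_top
    (hpi : ∀ t : ℝ, 0 < t → ∀ f : V → ℝ, MemL2 m f → (∀ x, 0 ≤ f x) → f ≠ 0 →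
      ∀ y, 0 < S.T t f y) {x w : V} (h : S.green x w = ⊤) (y : V) : S.green x y = ⊤ := by
  have hpos := hpi 1 one_pos _ (memL2_single w) (single_one_nonneg w) (by simp) y
  have := S.resolventKernel_harnack 0 x w y
  rw [← green_eq_resolventKernel, ← green_eq_resolventKernel, h,
    ENNReal.mul_top (by simpa using hpos)] at this
  exact top_le_iff.1 this

lemma R_single_harnack (hα : 0 < α) (hα1 : α ≤ 1) (x w y : V) :
    Real.exp (-1) * S.T 1 (Pi.single w 1) y * S.R α (Pi.single x 1) w ≤
      S.R α (Pi.single x 1) y := by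
  have hT := S.T_pos 1 one_pos _ (single_one_nonneg w) y
  have h := S.resolventKernel_harnack α x w y
  rw [← S.ofReal_R_single hα, ← S.ofReal_R_single hα,
    ← ENNReal.ofReal_mul (mul_nonneg (Real.exp_pos _).le hT),
    ENNReal.ofReal_le_ofReal_iff (S.R_single_nonneg hα x y)] at h
  refine le_trans ?_ h
  gcongr
  exact S.R_single_nonneg hα x w

lemma energyBilin_R_le (hm : ∀ x, 0 ≤ m x) (hα : 0 < α) {f : V → ℝ} (hf : MemL2 m f) :
    G.energyBilin (S.R α f) (S.R α f) ≤ l2inner m f (S.R α f) := by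
  have hchar := S.R_char α hα f hf _ (S.R_mem α hα f hf)
  have : 0 ≤ l2inner m (S.R α f) (S.R α f) :=
    tsum_nonneg fun x => mul_nonneg (mul_self_nonneg _) (hm x)
  nlinarith

section NoKilling

variable (hc : ∀ x, G.c x = 0)
include hc

lemma summable_sq_grad_R (hα : 0 < α) {f : V → ℝ} (hf : MemL2 m f) :
    Summable fun p => G.grad (S.R α f) p ^ 2 :=
  (finiteEnergy_iff hc).1 (S.dom_fe _ (S.R_mem α hα f hf))

lemma tsum_sq_grad_R_single_le (hm : ∀ x, 0 ≤ m x) (hα : 0 < α) (x : V) :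
    ∑' p, G.grad (S.R α (Pi.single x 1)) p ^ 2 ≤ 2 * (S.R α (Pi.single x 1) x * m x) := by
  have := S.energyBilin_R_le hm hα (memL2_single x)
  rw [energyBilin_eq hc, l2inner_single_left] at this
  simp only [sq]
  linarith

lemma laplacian_R_single (hdom : S.dom = G.regDom m) (hα : 0 < α) (x z : V) :
    G.laplacian (S.R α (Pi.single x 1)) z + α * (S.R α (Pi.single x 1) z * m z) =
      (Pi.single x 1 : V → ℝ) z * m z := by
  have hfin : (Pi.single z (1 : ℝ) : V → ℝ).support.Finite :=
    (Set.finite_singleton z).subset Pi.support_single_subset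
  have := S.R_char α hα _ (memL2_single x) (Pi.single z 1)
    (hdom ▸ mem_regDom_of_finite_support hc hfin)
  rwa [energyBilin_eq hc, tsum_grad_mul_grad_of_finite_support
    (summable_b_mul_sub (S.summable_sq_grad_R hc hα (memL2_single x))) hfin,
    tsum_eq_single z fun y hy => by simp [hy], l2inner_single_right, l2inner_single_right,
    Pi.single_eq_same, one_mul, ← mul_assoc, one_div_mul_cancel two_ne_zero, one_mul] at this

lemma hasNullSequence_of_green_eq_top (hm : ∀ x, 0 < m x) (hdom : S.dom = G.regDom m)
    (hpi : ∀ t : ℝ, 0 < t → ∀ f : V → ℝ, MemL2 m f → (∀ x, 0 ≤ f x) → f ≠ 0 →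
      ∀ y, 0 < S.T t f y) {x : V} (h : S.green x x = ⊤) : G.HasNullSequence := by
  set g : ℕ → V → ℝ := fun n => S.R (1 / (n + 1)) (Pi.single x 1)
  have hA : Tendsto (fun n => g n x) atTop atTop := S.tendsto_R_single_atTop h
  refine hasNullSequence_of_regDom hc hm (w := fun n z => (g n x)⁻¹ * g n z)
    (fun n => const_mul_mem_regDom (hdom ▸ S.R_mem _ Nat.one_div_pos_of_nat _ (memL2_single x)) _)
    ?_ fun z => ⟨Real.exp (-1) * S.T 1 (Pi.single x 1) z, mul_pos (Real.exp_pos _)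
      (hpi 1 one_pos _ (memL2_single x) (single_one_nonneg x) (by simp) z),
      (hA.eventually_gt_atTop 0).mono fun n hn => ?_⟩
  · refine squeeze_zero' (Eventually.of_forall fun n => tsum_nonneg fun _ => sq_nonneg _)
      ((hA.eventually_gt_atTop 0).mono fun n hn => ?_)
      (by simpa using hA.inv_tendsto_atTop.const_mul (2 * m x))
    simp only [grad_const_mul, mul_pow, tsum_mul_left]
    calc (g n x)⁻¹ ^ 2 * ∑' p, G.grad (g n) p ^ 2 ≤ (g n x)⁻¹ ^ 2 * (2 * (g n x * m x)) := by
          gcongr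
          exact S.tsum_sq_grad_R_single_le hc (fun x => (hm x).le) Nat.one_div_pos_of_nat x
      _ = 2 * m x * (g n x)⁻¹ := by field_simp
  · rw [le_inv_mul_iff₀ hn, mul_comm]
    exact S.R_single_harnack Nat.one_div_pos_of_nat
      (by simpa using Nat.one_div_le_one_div (α := ℝ) (Nat.zero_le n)) x x z

lemma summable_sq_grad_green (hm : ∀ x, 0 ≤ m x) {x : V} (hfin : ∀ y, S.green x y ≠ ⊤) :
    Summable fun p => G.grad (fun y => (S.green x y).toReal) p ^ 2 :=
  summable_sq_grad_of_tendsto (C := 2 * ((S.green x x).toReal * m x))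
    (fun y => S.tendsto_R_single_green (hfin y))
    (fun _ => S.summable_sq_grad_R hc Nat.one_div_pos_of_nat (memL2_single x))
    fun _ => (S.tsum_sq_grad_R_single_le hc hm Nat.one_div_pos_of_nat x).trans <| by
      gcongr
      exacts [hm x, S.R_single_le_green Nat.one_div_pos_of_nat (hfin x)]

lemma laplacian_green (hm : ∀ x, 0 ≤ m x) (hdom : S.dom = G.regDom m) {x : V}
    (hfin : ∀ y, S.green x y ≠ ⊤) (z : V) :
    G.laplacian (fun y => (S.green x y).toReal) z = (Pi.single x 1 : V → ℝ) z * m z := by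
  have hlap := tendsto_laplacian (x := z)
    (summable_b_mul (S.summable_sq_grad_green hc hm hfin) z)
    (fun n y => by
      rw [abs_of_nonneg (S.R_single_nonneg Nat.one_div_pos_of_nat x y)]
      exact S.R_single_le_green Nat.one_div_pos_of_nat (hfin y))
    fun y => S.tendsto_R_single_green (hfin y)
  have hres := hlap.add (tendsto_one_div_add_atTop_nhds_zero_nat.mul
    ((S.tendsto_R_single_green (hfin z)).mul_const (m z)))
  rw [zero_mul, add_zero] at hres
  exact tendsto_nhds_unique (hres.congr fun n => S.laplacian_R_single hc hdom
    Nat.one_div_pos_of_nat x z) tendsto_const_nhds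

end NoKilling

end FormSetup

theorem recurrence_iff_superharmonic_constant_general {V : Type*}
    (G : WeightedGraph V) (m : V → ℝ) (hm : ∀ x, 0 < m x) (hconn : G.Connected)
    (hc : ∀ x, G.c x = 0) (S : FormSetup G m) (hdom : S.dom = G.regDom m)
    (hpi : ∀ t : ℝ, 0 < t → ∀ f : V → ℝ, MemL2 m f → (∀ x, 0 ≤ f x) → f ≠ 0 →
      ∀ y, 0 < S.T t f y) :
    (∀ x y, S.green x y = ⊤) ↔
      ∀ u : V → ℝ, G.FiniteEnergy u → (∀ x, 0 ≤ G.formalL m u x) →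
        ∀ x y, u x = u y := by
  classical
  constructor
  · intro hrec u hu hsup x y
    have hnull := S.hasNullSequence_of_green_eq_top hc hm hdom hpi (hrec x x)
    exact hconn.apply_eq (fun a b hab => hnull.apply_eq_of_adj
      ((WeightedGraph.finiteEnergy_iff hc).1 hu)
      (fun z => (WeightedGraph.formalL_nonneg_iff hc (hm z)).1 (hsup z)) hab) x y
  · intro hconst
    by_contra hrec
    obtain ⟨x, y, hxy⟩ : ∃ x y, S.green x y ≠ ⊤ := by simpa using hrec
    have hfin : ∀ z, S.green x z ≠ ⊤ := fun z hz => hxy (S.green_eq_top_of_green_eq_top hpi hz y)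
    have hlap := S.laplacian_green hc (fun z => (hm z).le) hdom hfin
    have hGconst := hconst _ ((WeightedGraph.finiteEnergy_iff hc).2
      (S.summable_sq_grad_green hc (fun z => (hm z).le) hfin)) fun z =>
        (WeightedGraph.formalL_nonneg_iff hc (hm z)).2
          (hlap z ▸ mul_nonneg (single_one_nonneg x z) (hm z).le)
    have hzero := WeightedGraph.laplacian_eq_zero_of_forall_eq (G := G)
      (u := fun z => (S.green x z).toReal) (hGconst x)
    rw [hlap, Pi.single_eq_same, one_mul] at hzero
    exact (hm x).ne' hzero

/-- superharmonic characterization of recurrence: the regular Dirichlet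
form of a connected graph `(b,0)` is recurrent iff every superharmonic function of
finite energy is constant. -/
theorem recurrence_iff_superharmonic_constant {V : Type*} [Countable V]
    (G : WeightedGraph V) (m : V → ℝ) (hm : ∀ x, 0 < m x) (hconn : G.Connected)
    (hc : ∀ x, G.c x = 0) (S : FormSetup G m) (hdom : S.dom = G.regDom m)
    (hpi : ∀ t : ℝ, 0 < t → ∀ f : V → ℝ, MemL2 m f → (∀ x, 0 ≤ f x) → f ≠ 0 →
      ∀ y, 0 < S.T t f y) :
    (∀ x y, S.green x y = ⊤) ↔
      ∀ u : V → ℝ, G.FiniteEnergy u → (∀ x, 0 ≤ G.formalL m u x) →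
        ∀ x y, u x = u y :=
  recurrence_iff_superharmonic_constant_general G m hm hconn hc S hdom hpi
end
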